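/- arXiv:2507.22540 — 13 statements merged into one kernel-verified Lean document; each statement's English description precedes it below -/
import Mathlib

section
/- Let k ≥ 2 and let u : (0,1) → ℝ be C², bounded from below, such that for all r ∈ (0,1), min(u''(r) + (k-1)u'(r)/r, k·u'(r)/r) ≤ 0. Then there exists r₀ ∈ (0,1) such that u'(r) ≤ 0 for all r ∈ (0,r₀). -/
open Set Filter Topology

/-!
If `u'(a) > 0`, then `g(r) = r^(k-1) u'(r)` is decreasing wherever it is positive, since there
the second entry of the minimum is positive and the first one is `g'(r) / r^(k-1)`. Hence
`g ≥ g(a) > 0` on `(0, a]`, and as `k ≥ 2` this gives `u'(r) ≥ g(a) / r`, so `u` decreases at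
least like `g(a) log r` as `r → 0` and cannot be bounded below.
-/

theorem hasDerivAt_pow_mul {f : ℝ → ℝ} {f' x : ℝ} (n : ℕ) (hx : x ≠ 0)
    (hf : HasDerivAt f f' x) :
    HasDerivAt (fun y => y ^ n * f y) (x ^ n * (f' + n * f x / x)) x := by
  refine ((hasDerivAt_pow n x).mul hf).congr_deriv ?_
  rcases n with _ | n
  · simp
  · field_simp
    push_cast
    ring

theorem le_max_of_hasDerivAt_nonpos_of_pos {f f' : ℝ → ℝ} {s t : ℝ} (hst : s ≤ t)
    (hf : ∀ x ∈ Icc s t, HasDerivAt f (f' x) x) (hf' : ∀ x ∈ Ioo s t, 0 < f x → f' x ≤ 0) :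
    f t ≤ max (f s) 0 := by
  by_contra! hlt
  set m := max (f s) 0
  have hcont : ContinuousOn f (Icc s t) := fun x hx => (hf x hx).continuousAt.continuousWithinAt
  set S := Icc s t ∩ f ⁻¹' Iic m
  have hS : IsCompact S := isCompact_Icc.of_isClosed_subset
    (hcont.preimage_isClosed_of_isClosed isClosed_Icc isClosed_Iic) inter_subset_left
  -- `b` is the last point where `f ≤ m`; on `(b, t)` the function is positive, hence antitone.
  set b := sSup S
  have hb : b ∈ S := hS.sSup_mem ⟨s, left_mem_Icc.2 hst, show f s ≤ m from le_max_left _ _⟩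
  have hbt : b < t := hb.1.2.lt_of_ne fun hbt => hlt.not_ge (hbt ▸ hb.2)
  have hgt : ∀ x ∈ Ioo b t, m < f x := fun x hx => by
    by_contra! hle
    have : x ≤ b := le_csSup hS.bddAbove ⟨⟨hb.1.1.trans hx.1.le, hx.2.le⟩, hle⟩
    linarith [hx.1]
  have hanti : AntitoneOn f (Icc b t) := by
    refine antitoneOn_of_hasDerivWithinAt_nonpos (f' := f') (convex_Icc b t)
      (hcont.mono (Icc_subset_Icc_left hb.1.1)) (fun x hx => ?_) (fun x hx => ?_)
    all_goals rw [interior_Icc] at hx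
    · exact (hf x ⟨hb.1.1.trans hx.1.le, hx.2.le⟩).hasDerivWithinAt
    · exact hf' x ⟨hb.1.1.trans_lt hx.1, hx.2⟩ ((le_max_right _ _).trans_lt (hgt x hx))
  have hfb : f b ≤ m := hb.2
  linarith [hanti (left_mem_Icc.2 hbt.le) (right_mem_Icc.2 hbt.le) hbt.le]

theorem not_bddBelow_of_div_le_deriv {u u' : ℝ → ℝ} {a c : ℝ} (ha : 0 < a) (hc : 0 < c)
    (hu : ∀ r ∈ Ioc 0 a, HasDerivAt u (u' r) r) (hle : ∀ r ∈ Ioc 0 a, c / r ≤ u' r) :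
    ¬BddBelow (u '' Ioo 0 a) := by
  rintro ⟨m, hm⟩
  set v : ℝ → ℝ := fun x => u x - c * Real.log x
  have hv : ∀ r ∈ Ioc 0 a, HasDerivAt v (u' r - c / r) r := fun r hr =>
    ((hu r hr).sub ((Real.hasDerivAt_log hr.1.ne').const_mul c)).congr_deriv (by ring)
  have hmono : MonotoneOn v (Ioc 0 a) :=
    monotoneOn_of_hasDerivWithinAt_nonneg (convex_Ioc 0 a)
      (fun x hx => (hv x hx).continuousAt.continuousWithinAt)
      (fun x hx => (hv x (interior_subset hx)).hasDerivWithinAt)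
      (fun x hx => sub_nonneg.2 (hle x (interior_subset hx)))
  obtain ⟨r, hlog, hr⟩ :=
    ((Real.tendsto_log_nhdsGT_zero.eventually (eventually_lt_atBot ((m - v a) / c))).and
      (Ioo_mem_nhdsGT ha)).exists
  have hvr : v r ≤ v a := hmono ⟨hr.1, hr.2.le⟩ ⟨ha, le_rfl⟩ hr.2.le
  have hmr : m ≤ u r := hm ⟨r, hr, rfl⟩
  have : Real.log r * c < m - v a := (lt_div_iff₀ hc).1 hlog
  simp only [v] at hvr this
  linarith

theorem deriv_nonpos_of_min_radial_le_zero {k : ℕ} (hk : 2 ≤ k) {u u' u'' : ℝ → ℝ}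
    (hu' : ∀ r ∈ Ioo (0:ℝ) 1, HasDerivAt u (u' r) r)
    (hu'' : ∀ r ∈ Ioo (0:ℝ) 1, HasDerivAt u' (u'' r) r)
    (hbdd : BddBelow (u '' Ioo (0:ℝ) 1))
    (h : ∀ r ∈ Ioo (0:ℝ) 1, min (u'' r + ((k:ℝ) - 1) * u' r / r) ((k:ℝ) * u' r / r) ≤ 0) :
    ∀ a ∈ Ioo (0:ℝ) 1, u' a ≤ 0 := by
  intro a ha
  by_contra! hpos
  set g : ℝ → ℝ := fun r => r ^ (k - 1) * u' r
  have hg : ∀ r ∈ Ioo (0:ℝ) 1,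
      HasDerivAt g (r ^ (k - 1) * (u'' r + ((k:ℝ) - 1) * u' r / r)) r := fun r hr => by
    have := hasDerivAt_pow_mul (k - 1) hr.1.ne' (hu'' r hr)
    rwa [Nat.cast_sub (by omega : 1 ≤ k), Nat.cast_one] at this
  have hg_nonpos : ∀ r ∈ Ioo (0:ℝ) 1, 0 < g r →
      r ^ (k - 1) * (u'' r + ((k:ℝ) - 1) * u' r / r) ≤ 0 := fun r hr hgr => by
    have hu'r : 0 < u' r := pos_of_mul_pos_right hgr (pow_pos hr.1 _).le
    have hk0 : (0:ℝ) < k := by exact_mod_cast (by omega : 0 < k)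
    exact mul_nonpos_of_nonneg_of_nonpos (pow_pos hr.1 _).le
      ((min_le_iff.1 (h r hr)).resolve_right (not_le.2 (div_pos (mul_pos hk0 hu'r) hr.1)))
  have hga : 0 < g a := mul_pos (pow_pos ha.1 _) hpos
  have hlower : ∀ r ∈ Ioc 0 a, g a / r ≤ u' r := fun r hr => by
    have hsub : Icc r a ⊆ Ioo 0 1 := fun x hx => ⟨hr.1.trans_le hx.1, hx.2.trans_lt ha.2⟩
    have hgr : g a ≤ g r :=
      (le_max_iff.1 (le_max_of_hasDerivAt_nonpos_of_pos hr.2 (fun x hx => hg x (hsub hx))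
        (fun x hx => hg_nonpos x (hsub (Ioo_subset_Icc_self hx))))).resolve_right hga.not_ge
    have hu'r : 0 < u' r := pos_of_mul_pos_right (hga.trans_le hgr) (pow_pos hr.1 _).le
    have hpow : r ^ (k - 1) ≤ r := by
      simpa using pow_le_pow_of_le_one hr.1.le (hr.2.trans ha.2.le) (by omega : 1 ≤ k - 1)
    rw [div_le_iff₀ hr.1]
    calc g a ≤ r ^ (k - 1) * u' r := hgr
      _ ≤ u' r * r := by nlinarith
  exact not_bddBelow_of_div_le_deriv ha.1 hga (fun r hr => hu' r ⟨hr.1, hr.2.trans_lt ha.2⟩)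
    hlower (hbdd.mono (image_mono (Ioo_subset_Ioo_right ha.2.le)))

theorem stmt1_general (k : ℕ) (hk : 2 ≤ k)
    (u u' u'' : ℝ → ℝ)
    (hu' : ∀ r ∈ Ioo (0:ℝ) 1, HasDerivAt u (u' r) r)
    (hu'' : ∀ r ∈ Ioo (0:ℝ) 1, HasDerivAt u' (u'' r) r)
    (hbdd : BddBelow (u '' Ioo (0:ℝ) 1))
    (h : ∀ r ∈ Ioo (0:ℝ) 1,
      min (u'' r + ((k:ℝ) - 1) * u' r / r) ((k:ℝ) * u' r / r) ≤ 0) :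
    ∃ r₀ ∈ Ioo (0:ℝ) 1, ∀ r ∈ Ioo (0:ℝ) r₀, u' r ≤ 0 :=
  ⟨1 / 2, by norm_num, fun r hr =>
    deriv_nonpos_of_min_radial_le_zero hk hu' hu'' hbdd h r ⟨hr.1, hr.2.trans (by norm_num)⟩⟩

theorem stmt1 (k : ℕ) (hk : 2 ≤ k)
    (u u' u'' : ℝ → ℝ)
    (hu' : ∀ r ∈ Ioo (0:ℝ) 1, HasDerivAt u (u' r) r)
    (hu'' : ∀ r ∈ Ioo (0:ℝ) 1, HasDerivAt u' (u'' r) r)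
    (hu''c : ContinuousOn u'' (Ioo (0:ℝ) 1))
    (hbdd : BddBelow (u '' Ioo (0:ℝ) 1))
    (h : ∀ r ∈ Ioo (0:ℝ) 1,
      min (u'' r + ((k:ℝ) - 1) * u' r / r) ((k:ℝ) * u' r / r) ≤ 0) :
    ∃ r₀ ∈ Ioo (0:ℝ) 1, ∀ r ∈ Ioo (0:ℝ) r₀, u' r ≤ 0 :=
  stmt1_general k hk u u' u'' hu' hu'' hbdd h
end

section
/- Let u : (0,1) → ℝ be C² such that min(u''(r)+(k-1)u'(r)/r, k·u'(r)/r) < 0 for all r ∈ (0,1), and suppose u'(r) ≤ 0 for all sufficiently small r > 0. Then u'(r) ≤ 0 for all r ∈ (0,1). -/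
open Set Filter Topology

theorem stmt2 (k : ℕ)
    (u u' u'' : ℝ → ℝ)
    (hu' : ∀ r ∈ Ioo (0:ℝ) 1, HasDerivAt u (u' r) r)
    (hu'' : ∀ r ∈ Ioo (0:ℝ) 1, HasDerivAt u' (u'' r) r)
    (hu''c : ContinuousOn u'' (Ioo (0:ℝ) 1))
    (h : ∀ r ∈ Ioo (0:ℝ) 1,
      min (u'' r + ((k:ℝ) - 1) * u' r / r) ((k:ℝ) * u' r / r) < 0)
    (hsmall : ∃ r₀ ∈ Ioo (0:ℝ) 1, ∀ r ∈ Ioo (0:ℝ) r₀, u' r ≤ 0) :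
    ∀ r ∈ Ioo (0:ℝ) 1, u' r ≤ 0 := by
  intro r₁ hr₁
  by_contra hpos
  push_neg at hpos
  obtain ⟨r₀, hr₀, hsm⟩ := hsmall
  set c := r₀ / 2 with hc
  have hc0 : 0 < c := by have := hr₀.1; positivity
  have hcr₀ : c < r₀ := by have := hr₀.1; simp only [hc]; linarith
  have hr₀r₁ : r₀ ≤ r₁ := by
    by_contra hlt
    push_neg at hlt
    exact absurd (hsm r₁ ⟨hr₁.1, hlt⟩) (not_le.mpr hpos)
  have hcr₁ : c ≤ r₁ := by linarith
  set S := {r | r ∈ Icc c r₁ ∧ u' r ≤ 0} with hS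
  have hcS : c ∈ S := ⟨⟨le_refl c, hcr₁⟩, hsm c ⟨hc0, hcr₀⟩⟩
  have hSne : S.Nonempty := ⟨c, hcS⟩
  have hbdd : BddAbove S := ⟨r₁, fun x hx => hx.1.2⟩
  set s := sSup S with hs_def
  have hsmem : s ∈ Icc c r₁ := ⟨le_csSup hbdd hcS, csSup_le hSne fun x hx => hx.1.2⟩
  have hsIoo : s ∈ Ioo (0:ℝ) 1 := ⟨lt_of_lt_of_le hc0 hsmem.1, lt_of_le_of_lt hsmem.2 hr₁.2⟩
  have hcont : ContinuousAt u' s := (hu'' s hsIoo).continuousAt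
  have hle : u' s ≤ 0 := by
    have hcl : s ∈ closure S := csSup_mem_closure hSne hbdd
    obtain ⟨x, hxS, hxt⟩ := mem_closure_iff_seq_limit.mp hcl
    exact le_of_tendsto (hcont.tendsto.comp hxt) (Eventually.of_forall fun n => (hxS n).2)
  have hCpos : ∀ r, s < r → r ≤ r₁ → 0 < u' r := by
    intro r hsr hrr₁
    by_contra hnp
    push_neg at hnp
    have hrS : r ∈ S := ⟨⟨le_trans hsmem.1 hsr.le, hrr₁⟩, hnp⟩
    exact absurd (le_csSup hbdd hrS) (not_le.mpr hsr)
  have hsr₁ : s < r₁ := by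
    rcases lt_or_eq_of_le hsmem.2 with hlt | heq
    · exact hlt
    · exfalso; rw [heq] at hle; linarith
  have hs0 : u' s = 0 := by
    rcases lt_or_eq_of_le hle with hlt | heq
    · exfalso
      have h1 : ∀ᶠ r in 𝓝[>] s, u' r < 0 :=
        (hcont.tendsto.eventually_lt_const hlt).filter_mono nhdsWithin_le_nhds
      have h2 : Ioo s r₁ ∈ 𝓝[>] s := Ioo_mem_nhdsGT_of_mem ⟨le_refl s, hsr₁⟩
      obtain ⟨r, hr1, hr2⟩ := (h1.and (eventually_of_mem h2 fun x hx => hx)).exists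
      exact absurd (hCpos r hr2.1 hr2.2.le) (not_lt.mpr hr1.le)
    · exact heq
  have hneg : u'' s < 0 := by
    have hmin := h s hsIoo
    rw [hs0] at hmin
    simp only [mul_zero, zero_div, add_zero] at hmin
    rcases min_lt_iff.mp hmin with h' | h'
    · exact h'
    · exact absurd h' (lt_irrefl 0)
  have hd := hu'' s hsIoo
  rw [hasDerivAt_iff_tendsto_slope] at hd
  have hd' : Tendsto (slope u' s) (𝓝[>] s) (𝓝 (u'' s)) :=
    hd.mono_left (nhdsWithin_mono s (fun x hx => ne_of_gt hx))
  have h1 : ∀ᶠ r in 𝓝[>] s, slope u' s r < 0 := hd'.eventually_lt_const hneg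
  have h2 : Ioo s r₁ ∈ 𝓝[>] s := Ioo_mem_nhdsGT_of_mem ⟨le_refl s, hsr₁⟩
  obtain ⟨r, hr1, hr2⟩ := (h1.and (eventually_of_mem h2 fun x hx => hx)).exists
  have hru : u' r < 0 := by
    rw [slope_def_field, hs0, sub_zero] at hr1
    have hden : 0 < r - s := sub_pos.mpr hr2.1
    exact (div_neg_iff.mp hr1).elim (fun hh => by linarith [hh.2]) (fun hh => hh.1)
  exact absurd (hCpos r hr2.1 hr2.2.le) (not_lt.mpr hru.le)
end

section
/- Let g : (0,1) → ℝ be C¹ with g(r) < 0 and g'(r) ≥ 0 for all r ∈ (0,1). Let u : (0,1) → ℝ be C², bounded from below, satisfying max(u''(r)+(k-1)u'(r)/r, k·u'(r)/r) = g(r) for all r ∈ (0,1), with 1 ≤ k ≤ N. Then u''(r) - u'(r)/r ≥ 0 for all r ∈ (0,1). -/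
/-! Where `u'' - u'/r < 0`, the maximum is attained by its second branch, so `k u' = r g`
nearby; differentiating gives `k (u'' - u'/r) = r g' ≥ 0`, a contradiction. -/

open Set Filter Topology

lemma mul_eq_of_max_eq_of_sub_div_neg {k a b r c : ℝ} (hr : r ≠ 0) (h : a - b / r < 0)
    (hmax : max (a + (k - 1) * b / r) (k * b / r) = c) : k * b = r * c := by
  have hlt : a + (k - 1) * b / r < k * b / r := by
    have : a + (k - 1) * b / r - k * b / r = a - b / r := by ring
    linarith
  rw [max_eq_right hlt.le] at hmax
  rw [← hmax]
  field_simp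

lemma mul_eq_add_mul_of_eventually_mul_eq {f g : ℝ → ℝ} {a b c x : ℝ}
    (hf : HasDerivAt f a x) (hg : HasDerivAt g b x)
    (h : (fun y => c * f y) =ᶠ[𝓝 x] fun y => y * g y) : c * a = g x + x * b := by
  have hprod : HasDerivAt (fun y => y * g y) (1 * g x + x * b) x := (hasDerivAt_id x).mul hg
  have := (hf.const_mul c).unique (hprod.congr_of_eventuallyEq h)
  linarith

theorem stmt3_general (k : ℕ) (hk1 : 1 ≤ k)
    (g g' : ℝ → ℝ)
    (hg' : ∀ r ∈ Ioo (0:ℝ) 1, HasDerivAt g (g' r) r)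
    (hg'pos : ∀ r ∈ Ioo (0:ℝ) 1, 0 ≤ g' r)
    (u' u'' : ℝ → ℝ)
    (hu'' : ∀ r ∈ Ioo (0:ℝ) 1, HasDerivAt u' (u'' r) r)
    (hu''c : ContinuousOn u'' (Ioo (0:ℝ) 1))
    (heq : ∀ r ∈ Ioo (0:ℝ) 1,
      max (u'' r + ((k:ℝ) - 1) * u' r / r) ((k:ℝ) * u' r / r) = g r) :
    ∀ r ∈ Ioo (0:ℝ) 1, 0 ≤ u'' r - u' r / r := by
  intro r hr
  by_contra! hneg
  have hnhds : Ioo (0:ℝ) 1 ∈ 𝓝 r := isOpen_Ioo.mem_nhds hr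
  have hcont : ContinuousAt (fun s => u'' s - u' s / s) r :=
    (hu''c.continuousAt hnhds).sub ((hu'' r hr).continuousAt.div continuousAt_id hr.1.ne')
  have hlin : ∀ᶠ s in 𝓝 r, (k:ℝ) * u' s = s * g s := by
    filter_upwards [hcont.eventually_lt_const hneg, hnhds] with s hs hsI
    exact mul_eq_of_max_eq_of_sub_div_neg hsI.1.ne' hs (heq s hsI)
  have hderiv := mul_eq_add_mul_of_eventually_mul_eq (hu'' r hr) (hg' r hr) hlin
  have hkey : (k:ℝ) * (u'' r - u' r / r) = r * g' r := by
    rw [mul_sub, hderiv, ← mul_div_assoc, hlin.self_of_nhds, mul_div_cancel_left₀ _ hr.1.ne']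
    ring
  have hk : (0:ℝ) < k := by exact_mod_cast hk1
  nlinarith [mul_nonneg hr.1.le (hg'pos r hr), mul_neg_of_pos_of_neg hk hneg]

theorem stmt3 (N k : ℕ) (hk1 : 1 ≤ k) (hkN : k ≤ N)
    (g g' : ℝ → ℝ)
    (hg' : ∀ r ∈ Ioo (0:ℝ) 1, HasDerivAt g (g' r) r)
    (hg'c : ContinuousOn g' (Ioo (0:ℝ) 1))
    (hgneg : ∀ r ∈ Ioo (0:ℝ) 1, g r < 0)
    (hg'pos : ∀ r ∈ Ioo (0:ℝ) 1, 0 ≤ g' r)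
    (u u' u'' : ℝ → ℝ)
    (hu' : ∀ r ∈ Ioo (0:ℝ) 1, HasDerivAt u (u' r) r)
    (hu'' : ∀ r ∈ Ioo (0:ℝ) 1, HasDerivAt u' (u'' r) r)
    (hu''c : ContinuousOn u'' (Ioo (0:ℝ) 1))
    (hbdd : BddBelow (u '' Ioo (0:ℝ) 1))
    (heq : ∀ r ∈ Ioo (0:ℝ) 1,
      max (u'' r + ((k:ℝ) - 1) * u' r / r) ((k:ℝ) * u' r / r) = g r) :
    ∀ r ∈ Ioo (0:ℝ) 1, 0 ≤ u'' r - u' r / r :=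
  stmt3_general k hk1 g g' hg' hg'pos u' u'' hu'' hu''c heq
end

section
/- Let γ ≥ 0, μ > 0, and let u : (0,1) → ℝ be C², positive, satisfying max(u''(r)+(k-1)u'(r)/r, k·u'(r)/r) + μ·u(r)/r^γ = 0 for all r ∈ (0,1) (with 1 ≤ k ≤ N). Then u'(r) ≤ 0 and u''(r) - u'(r)/r ≥ 0 for all r ∈ (0,1). -/
open Set Filter

/-- If `f` has derivative `f'` at `a` and `f x ≤ f a` on a left neighborhood `(b,a)`,
then `0 ≤ f'`. -/
lemma left_max_deriv_nonneg {f : ℝ → ℝ} {f' a b : ℝ} (hab : b < a)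
    (hf : HasDerivAt f f' a) (hle : ∀ x ∈ Ioo b a, f x ≤ f a) : 0 ≤ f' := by
  have h := hasDerivAt_iff_tendsto_slope.mp hf
  have h2 : Tendsto (slope f a) (nhdsWithin a (Iio a)) (nhds f') :=
    h.mono_left (nhdsWithin_mono a (fun x hx => ne_of_lt hx))
  refine ge_of_tendsto h2 ?_
  filter_upwards [Ioo_mem_nhdsLT_of_mem (⟨hab, le_refl a⟩ : a ∈ Ioc b a)] with x hx
  rw [slope_def_field]
  exact div_nonneg_of_nonpos (by linarith [hle x hx]) (by linarith [hx.2])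

theorem stmt4 (N k : ℕ) (hk1 : 1 ≤ k) (hkN : k ≤ N)
    (γ μ : ℝ) (hγ : 0 ≤ γ) (hμ : 0 < μ)
    (u u' u'' : ℝ → ℝ)
    (hu' : ∀ r ∈ Ioo (0:ℝ) 1, HasDerivAt u (u' r) r)
    (hu'' : ∀ r ∈ Ioo (0:ℝ) 1, HasDerivAt u' (u'' r) r)
    (hu''c : ContinuousOn u'' (Ioo (0:ℝ) 1))
    (hupos : ∀ r ∈ Ioo (0:ℝ) 1, 0 < u r)
    (heq : ∀ r ∈ Ioo (0:ℝ) 1,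
      max (u'' r + ((k:ℝ) - 1) * u' r / r) ((k:ℝ) * u' r / r)
        + μ * u r / r ^ γ = 0) :
    ∀ r ∈ Ioo (0:ℝ) 1, u' r ≤ 0 ∧ 0 ≤ u'' r - u' r / r := by
  have hk0 : (0:ℝ) < (k:ℝ) := by exact_mod_cast Nat.lt_of_lt_of_le Nat.zero_lt_one hk1
  -- the function g
  set g : ℝ → ℝ := fun r => -(μ / k * (u r * r ^ (-γ))) with hg
  -- Basic pointwise inequality: k u'/r ≤ -(μ u / r^γ)
  have hB : ∀ r ∈ Ioo (0:ℝ) 1, (k:ℝ) * u' r / r ≤ -(μ * u r / r ^ γ) := by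
    intro r hr
    have h := heq r hr
    have := le_max_right (u'' r + ((k:ℝ) - 1) * u' r / r) ((k:ℝ) * u' r / r)
    linarith
  -- u' < 0
  have hneg : ∀ r ∈ Ioo (0:ℝ) 1, u' r < 0 := by
    intro r hr
    have h1 := hB r hr
    have hr0 := hr.1
    have hrγ : (0:ℝ) < r ^ γ := Real.rpow_pos_of_pos hr0 γ
    have hup : 0 < μ * u r / r ^ γ := by exact div_pos (mul_pos hμ (hupos r hr)) hrγ
    by_contra hc
    push_neg at hc
    have : 0 ≤ (k:ℝ) * u' r / r := div_nonneg (mul_nonneg hk0.le hc) hr0.le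
    linarith
  -- u' r ≤ r * g r
  have hle : ∀ r ∈ Ioo (0:ℝ) 1, u' r ≤ r * g r := by
    intro r hr
    have h1 := hB r hr
    have hr0 := hr.1
    have hrγ : (0:ℝ) < r ^ γ := Real.rpow_pos_of_pos hr0 γ
    have hrw : r ^ (-γ) = (r ^ γ)⁻¹ := Real.rpow_neg hr0.le γ
    have h2 : (k:ℝ) * u' r ≤ -(μ * u r / r ^ γ) * r := (div_le_iff₀ hr0).mp h1
    rw [hg]
    simp only [hrw]
    rw [show r * -(μ / k * (u r * (r ^ γ)⁻¹)) = (-(μ * u r / r ^ γ) * r) / k by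
      field_simp]
    rw [le_div_iff₀ hk0]
    linarith [h2]
  -- g is monotone on Ioo 0 1
  have hgd : ∀ r ∈ Ioo (0:ℝ) 1,
      HasDerivAt g (-(μ / k * (u' r * r ^ (-γ) + u r * (-γ * r ^ (-γ - 1))))) r := by
    intro r hr
    have h1 : HasDerivAt (fun x : ℝ => x ^ (-γ)) (-γ * r ^ (-γ - 1)) r :=
      Real.hasDerivAt_rpow_const (Or.inl (ne_of_gt hr.1))
    exact (((hu' r hr).mul h1).const_mul (μ / k)).neg
  have hgd_nonneg : ∀ r ∈ Ioo (0:ℝ) 1,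
      0 ≤ -(μ / k * (u' r * r ^ (-γ) + u r * (-γ * r ^ (-γ - 1)))) := by
    intro r hr
    have h1 : (0:ℝ) < r ^ (-γ) := Real.rpow_pos_of_pos hr.1 _
    have h2 : (0:ℝ) < r ^ (-γ - 1) := Real.rpow_pos_of_pos hr.1 _
    have h3 := hneg r hr
    have h4 := hupos r hr
    have h5 : u' r * r ^ (-γ) ≤ 0 := mul_nonpos_of_nonpos_of_nonneg h3.le h1.le
    have h6 : u r * (-γ * r ^ (-γ - 1)) ≤ 0 := by
      apply mul_nonpos_of_nonneg_of_nonpos h4.le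
      have : 0 ≤ γ * r ^ (-γ - 1) := mul_nonneg hγ h2.le
      linarith
    have : μ / k * (u' r * r ^ (-γ) + u r * (-γ * r ^ (-γ - 1))) ≤ 0 :=
      mul_nonpos_of_nonneg_of_nonpos (by positivity) (by linarith)
    linarith
  have hgmono : MonotoneOn g (Ioo (0:ℝ) 1) := by
    have hint : interior (Ioo (0:ℝ) 1) = Ioo (0:ℝ) 1 := isOpen_Ioo.interior_eq
    apply monotoneOn_of_hasDerivWithinAt_nonneg (f' := fun r =>
        -(μ / k * (u' r * r ^ (-γ) + u r * (-γ * r ^ (-γ - 1))))) (convex_Ioo 0 1)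
    · exact fun r hr => (hgd r hr).continuousAt.continuousWithinAt
    · rw [hint]; exact fun r hr => (hgd r hr).hasDerivWithinAt
    · rw [hint]; exact hgd_nonneg
  -- main conclusion
  intro r hr
  have hr0 := hr.1
  have hr1 := hr.2
  refine ⟨(hneg r hr).le, ?_⟩
  rcases eq_or_lt_of_le (hle r hr) with heq0 | hlt
  · -- equality case: use the left-maximum argument
    have hd : HasDerivAt (fun x => u' x - x * g r) (u'' r - 1 * g r) r :=
      (hu'' r hr).sub ((hasDerivAt_id r).mul_const (g r))
    have hmax : ∀ x ∈ Ioo (0:ℝ) r, u' x - x * g r ≤ u' r - r * g r := by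
      intro x hx
      have hx1 : x ∈ Ioo (0:ℝ) 1 := ⟨hx.1, hx.2.trans hr1⟩
      have h1 := hle x hx1
      have h2 : g x ≤ g r := hgmono hx1 hr hx.2.le
      have : x * g x ≤ x * g r := mul_le_mul_of_nonneg_left h2 hx.1.le
      have : u' r - r * g r = 0 := by rw [← heq0]; ring
      rw [this]
      nlinarith
    have h0 := left_max_deriv_nonneg hr0 hd hmax
    have hgr : g r = u' r / r := by
      field_simp [eq_div_iff (ne_of_gt hr0)]
      nlinarith [heq0]
    rw [one_mul, hgr] at h0
    linarith
  · -- strict case: the max is the first term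
    have hB' : (k:ℝ) * u' r / r < -(μ * u r / r ^ γ) := by
      have h1 : (k:ℝ) * u' r < (k:ℝ) * (r * g r) := by
        exact mul_lt_mul_of_pos_left hlt hk0
      have hkg : (k:ℝ) * (r * g r) = -(μ * u r / r ^ γ) * r := by
        rw [hg]
        simp only [Real.rpow_neg hr0.le]
        field_simp
      rw [hkg] at h1
      exact (div_lt_iff₀ hr0).mpr h1
    have hM := heq r hr
    rcases max_cases (u'' r + ((k:ℝ) - 1) * u' r / r) ((k:ℝ) * u' r / r) with
      ⟨hmx, hba⟩ | ⟨hmx, hab⟩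
    · -- max = A and B ≤ A
      rw [hmx] at hM
      have : (k:ℝ) * u' r / r - ((k:ℝ) - 1) * u' r / r = u' r / r := by ring
      linarith
    · -- max = B: contradiction with strict inequality
      rw [hmx] at hM
      linarith
end

section
/- Let k ≥ 3 and define u(r) = (-log r) · r^{-(k-2)/2} for r ∈ (0,1). Then u > 0 on (0,1), u''(r) ≥ u'(r)/r for all r ∈ (0,1), and u''(r) + (k-1)u'(r)/r + ((k-2)²/4) · u(r)/r² = 0 for all r ∈ (0,1). -/
open Set Topology

/-!
Writing `L = log r`, every function `r ^ p * (c * L + d)` differentiates on `(0, ∞)` to a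
function of the same shape, `r ^ (p - 1) * (c * p * L + (d * p + c))`. For the Hardy profile
`u = -L * r ^ (-a)` this gives `r² u'' = r ^ (-a) * (2a + 1 - a (a + 1) L)` and
`r u' = r ^ (-a) * (a L - 1)`, and with `k - 1 = 2a + 1`, `(k - 2)² / 4 = a²` the equation is
the identity `(2a + 1 - a (a + 1) L) + (2a + 1) (a L - 1) - a² L = 0`. Also
`r² (u'' - u' / r) = r ^ (-a) * (2a + 2 - a (a + 2) L)`, which is nonnegative for `a ≥ 0` and `L < 0`.
-/

section RpowMulLog

variable (p c d : ℝ) {x : ℝ}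

theorem hasDerivAt_rpow_mul_log_add (hx : 0 < x) :
    HasDerivAt (fun y => y ^ p * (c * Real.log y + d))
      (x ^ (p - 1) * (c * p * Real.log x + (d * p + c))) x := by
  have h := (Real.hasDerivAt_rpow_const (p := p) (Or.inl hx.ne')).mul
    (((Real.hasDerivAt_log hx.ne').const_mul c).add_const d)
  refine h.congr_deriv ?_
  rw [Real.rpow_sub_one hx.ne']
  field_simp
  ring

theorem deriv_rpow_mul_log_add (hx : 0 < x) :
    deriv (fun y => y ^ p * (c * Real.log y + d)) x
      = x ^ (p - 1) * (c * p * Real.log x + (d * p + c)) :=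
  (hasDerivAt_rpow_mul_log_add p c d hx).deriv

theorem deriv_deriv_rpow_mul_log_add (hx : 0 < x) :
    deriv (deriv fun y => y ^ p * (c * Real.log y + d)) x
      = x ^ (p - 2) * (c * p * (p - 1) * Real.log x + ((d * p + c) * (p - 1) + c * p)) := by
  have hderiv : deriv (fun y => y ^ p * (c * Real.log y + d))
      =ᶠ[𝓝 x] fun y => y ^ (p - 1) * (c * p * Real.log y + (d * p + c)) := by
    filter_upwards [Ioi_mem_nhds hx] with y hy
    exact deriv_rpow_mul_log_add p c d hy
  rw [hderiv.deriv_eq, deriv_rpow_mul_log_add _ _ _ hx, sub_sub, one_add_one_eq_two]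

end RpowMulLog

noncomputable def hardyProfile (a r : ℝ) : ℝ := -Real.log r * r ^ (-a)

namespace hardyProfile

variable {a r : ℝ}

theorem eq_rpow_mul_log_add (a : ℝ) :
    hardyProfile a = fun y => y ^ (-a) * (-1 * Real.log y + 0) := by
  funext y
  simp only [hardyProfile]
  ring

theorem pos (hr : r ∈ Ioo (0 : ℝ) 1) : 0 < hardyProfile a r :=
  mul_pos (neg_pos.mpr (Real.log_neg hr.1 hr.2)) (Real.rpow_pos_of_pos hr.1 _)

theorem deriv_eq (hr : 0 < r) :
    deriv (hardyProfile a) r = r ^ (-a) / r * (a * Real.log r - 1) := by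
  rw [eq_rpow_mul_log_add, deriv_rpow_mul_log_add _ _ _ hr, Real.rpow_sub_one hr.ne']
  ring

theorem deriv_deriv_eq (hr : 0 < r) :
    deriv (deriv (hardyProfile a)) r
      = r ^ (-a) / r ^ 2 * (2 * a + 1 - a * (a + 1) * Real.log r) := by
  rw [eq_rpow_mul_log_add, deriv_deriv_rpow_mul_log_add _ _ _ hr, Real.rpow_sub hr,
    Real.rpow_two]
  ring

theorem deriv_div_le_deriv_deriv (ha : 0 ≤ a) (hr : r ∈ Ioo (0 : ℝ) 1) :
    deriv (hardyProfile a) r / r ≤ deriv (deriv (hardyProfile a)) r := by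
  obtain ⟨hr0, hr1⟩ := hr
  have hlog : Real.log r < 0 := Real.log_neg hr0 hr1
  have hgap : deriv (deriv (hardyProfile a)) r - deriv (hardyProfile a) r / r
      = r ^ (-a) / r ^ 2 * (2 * a + 2 - a * (a + 2) * Real.log r) := by
    rw [deriv_eq hr0, deriv_deriv_eq hr0]
    field_simp
    ring
  have hcoeff : 0 ≤ 2 * a + 2 - a * (a + 2) * Real.log r := by
    nlinarith [mul_nonneg ha (by linarith : (0 : ℝ) ≤ a + 2)]
  have hfactor : 0 ≤ r ^ (-a) / r ^ 2 := by positivity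
  exact sub_nonneg.mp (hgap ▸ mul_nonneg hfactor hcoeff)

theorem hardy_equation (hr : 0 < r) :
    deriv (deriv (hardyProfile a)) r + (2 * a + 1) * deriv (hardyProfile a) r / r
      + a ^ 2 * hardyProfile a r / r ^ 2 = 0 := by
  rw [deriv_eq hr, deriv_deriv_eq hr, hardyProfile]
  field_simp
  ring

end hardyProfile

theorem stmt6 (k : ℕ) (hk : 3 ≤ k)
    (u : ℝ → ℝ) (hu : ∀ r : ℝ, u r = (-Real.log r) * r ^ (-(((k:ℝ) - 2) / 2))) :
    ∀ r ∈ Ioo (0:ℝ) 1,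
      0 < u r ∧
      deriv u r / r ≤ deriv (deriv u) r ∧
      deriv (deriv u) r + ((k:ℝ) - 1) * deriv u r / r
        + (((k:ℝ) - 2) ^ 2 / 4) * u r / r ^ 2 = 0 := by
  set a : ℝ := ((k:ℝ) - 2) / 2 with ha
  have hu' : u = hardyProfile a := funext hu
  have ha0 : 0 ≤ a := by
    have : (3 : ℝ) ≤ k := by exact_mod_cast hk
    linarith
  have hk1 : (k:ℝ) - 1 = 2 * a + 1 := by rw [ha]; ring
  have hk2 : ((k:ℝ) - 2) ^ 2 / 4 = a ^ 2 := by rw [ha]; ring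
  intro r hr
  rw [hu', hk1, hk2]
  exact ⟨hardyProfile.pos hr, hardyProfile.deriv_div_le_deriv_deriv ha0 hr,
    hardyProfile.hardy_equation hr.1⟩
end

section
/- Let γ ≥ 1 and μ > 0. There is no C² function v : (0,1) → ℝ with v > 0 satisfying both v''(r) ≤ -μ v(r) r^{-γ} and v'(r) ≤ -μ v(r) r^{1-γ} for all r ∈ (0,1). -/
/-!
Since `v > 0` and `v' ≤ 0`, `v` is bounded below near `0` by `v (1/2) > 0`, and `r^{-γ} ≥ r⁻¹`
for `γ ≥ 1`; hence `v'' ≤ -c / r` with `c = μ v (1/2) > 0`. Then `v' + c log` is antitone, so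
`v' ≥ const - c log r → +∞` as `r → 0⁺`, contradicting `v' ≤ 0`.
-/

open Set Filter Topology

lemma antitoneOn_Ioo_of_hasDerivAt_nonpos {f f' : ℝ → ℝ} {a b : ℝ}
    (hf : ∀ x ∈ Ioo a b, HasDerivAt f (f' x) x) (hf' : ∀ x ∈ Ioo a b, f' x ≤ 0) :
    AntitoneOn f (Ioo a b) :=
  antitoneOn_of_hasDerivWithinAt_nonpos (convex_Ioo a b)
    (fun x hx ↦ (hf x hx).continuousAt.continuousWithinAt)
    (fun x hx ↦ (hf x (interior_subset hx)).hasDerivWithinAt)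
    (fun x hx ↦ hf' x (interior_subset hx))

lemma inv_le_rpow_neg_of_one_le {r γ : ℝ} (hr₀ : 0 < r) (hr₁ : r ≤ 1) (hγ : 1 ≤ γ) :
    r⁻¹ ≤ r ^ (-γ) := by
  simpa only [Real.rpow_neg_one] using Real.rpow_le_rpow_of_exponent_ge hr₀ hr₁ (neg_le_neg hγ)

lemma tendsto_nhdsGT_zero_atTop_of_deriv_le_neg_div {f f' : ℝ → ℝ} {b c : ℝ} (hb : 0 < b)
    (hc : 0 < c)
    (hf : ∀ x ∈ Ioo 0 b, HasDerivAt f (f' x) x) (hf' : ∀ x ∈ Ioo 0 b, f' x ≤ -(c / x)) :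
    Tendsto f (𝓝[>] 0) atTop := by
  obtain ⟨x₀, hx₀⟩ : (Ioo 0 b).Nonempty := nonempty_Ioo.2 hb
  have hanti : AntitoneOn (fun x ↦ f x + c * Real.log x) (Ioo 0 b) := by
    refine antitoneOn_Ioo_of_hasDerivAt_nonpos (f' := fun x ↦ f' x + c * x⁻¹)
      (fun x hx ↦ (hf x hx).add ((Real.hasDerivAt_log hx.1.ne').const_mul c)) fun x hx ↦ ?_
    have := hf' x hx
    rw [div_eq_mul_inv] at this
    linarith
  have hlower : ∀ᶠ x in 𝓝[>] 0, f x₀ + c * Real.log x₀ - c * Real.log x ≤ f x := by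
    filter_upwards [Ioo_mem_nhdsGT hx₀.1] with x hx
    have := hanti ⟨hx.1, hx.2.trans hx₀.2⟩ hx₀ hx.2.le
    simp only at this
    linarith
  refine tendsto_atTop_mono' _ hlower (tendsto_atTop_add_const_left _ _ ?_)
  simpa only [sub_eq_add_neg, neg_mul_eq_neg_mul] using
    Real.tendsto_log_nhdsGT_zero.const_mul_atBot_of_neg (neg_neg_of_pos hc)

theorem stmt8 (γ μ : ℝ) (hγ : 1 ≤ γ) (hμ : 0 < μ) :
    ¬ ∃ (v v' v'' : ℝ → ℝ),
      (∀ r ∈ Ioo (0:ℝ) 1, HasDerivAt v (v' r) r) ∧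
      (∀ r ∈ Ioo (0:ℝ) 1, HasDerivAt v' (v'' r) r) ∧
      ContinuousOn v'' (Ioo (0:ℝ) 1) ∧
      (∀ r ∈ Ioo (0:ℝ) 1, 0 < v r) ∧
      (∀ r ∈ Ioo (0:ℝ) 1, v'' r ≤ -μ * v r * r ^ (-γ)) ∧
      (∀ r ∈ Ioo (0:ℝ) 1, v' r ≤ -μ * v r * r ^ (1 - γ)) := by
  rintro ⟨v, v', v'', hv, hv', -, hv_pos, hv''_le, hv'_le⟩
  have hv'_nonpos : ∀ r ∈ Ioo (0:ℝ) 1, v' r ≤ 0 := fun r hr ↦ (hv'_le r hr).trans <| by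
    have := mul_pos (mul_pos hμ (hv_pos r hr)) (Real.rpow_pos_of_pos hr.1 (1 - γ))
    linarith
  have hv_anti := antitoneOn_Ioo_of_hasDerivAt_nonpos hv hv'_nonpos
  have hhalf : (1/2 : ℝ) ∈ Ioo (0:ℝ) 1 := by norm_num
  set c := μ * v (1/2)
  have hv''_le_div : ∀ r ∈ Ioo (0:ℝ) (1/2), v'' r ≤ -(c / r) := by
    intro r hr
    have hr1 : r ∈ Ioo (0:ℝ) 1 := ⟨hr.1, hr.2.trans hhalf.2⟩
    have hv_ge : v (1/2) ≤ v r := hv_anti hr1 hhalf hr.2.le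
    calc v'' r ≤ -μ * v r * r ^ (-γ) := hv''_le r hr1
      _ ≤ -(c * r⁻¹) := by
        rw [neg_mul, neg_mul, neg_le_neg_iff, mul_assoc, mul_assoc]
        exact mul_le_mul_of_nonneg_left (mul_le_mul hv_ge
          (inv_le_rpow_neg_of_one_le hr.1 hr1.2.le hγ) (inv_pos.2 hr.1).le (hv_pos r hr1).le) hμ.le
      _ = -(c / r) := by rw [div_eq_mul_inv]
  have hv'_tendsto := tendsto_nhdsGT_zero_atTop_of_deriv_le_neg_div (by norm_num)
    (mul_pos hμ (hv_pos _ hhalf)) (fun r hr ↦ hv' r ⟨hr.1, hr.2.trans hhalf.2⟩) hv''_le_div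
  obtain ⟨r, hr_pos, hr⟩ :=
    ((hv'_tendsto.eventually_gt_atTop 0).and (Ioo_mem_nhdsGT one_pos)).exists
  exact (hr_pos.trans_le (hv'_nonpos r hr)).false
end

section
/- Let 1 ≤ k ≤ N-1, μ > 0, and γ ≥ 0 with γ ≠ 2. Define v(r) = exp(-(μ/(k(2-γ))) r^{2-γ}) for r ∈ (0,1). Then v > 0, v'(r)/r = -(μ/k) v(r) r^{-γ}, v''(r) - v'(r)/r ≥ 0 for all r ∈ (0,1), and consequently min(v''(r)+(k-1)v'(r)/r, k·v'(r)/r) + μ v(r) r^{-γ} = 0 for all r ∈ (0,1). -/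
/-!
The profile `v r = exp (-(a/p) r^p)` with `a = μ/k`, `p = 2 - γ` satisfies `v' = -a r^(p-1) v`, so
`k v'/r = -μ r^(-γ) v`, and `v'' - v'/r = (a γ r^(-γ) + a² r^(2-2γ)) v ≥ 0`. The latter inequality makes
the minimum defining the truncated Laplacian equal to `k v'/r`, whence the equation.
-/

open Set Real Filter Topology

noncomputable def stretchedExp (a p x : ℝ) : ℝ := exp (-(a / p) * x ^ p)

section StretchedExp

variable {a p x : ℝ}

theorem hasDerivAt_stretchedExp (hp : p ≠ 0) (hx : 0 < x) :
    HasDerivAt (stretchedExp a p) (-a * x ^ (p - 1) * stretchedExp a p x) x := by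
  have h : HasDerivAt (stretchedExp a p) _ x :=
    ((hasDerivAt_rpow_const (Or.inl hx.ne')).const_mul (-(a / p))).exp
  convert h using 1
  rw [stretchedExp]
  field_simp

theorem deriv_stretchedExp_eventuallyEq (hp : p ≠ 0) (hx : 0 < x) :
    deriv (stretchedExp a p) =ᶠ[𝓝 x] fun y => -a * y ^ (p - 1) * stretchedExp a p y := by
  filter_upwards [eventually_gt_nhds hx] with y hy
  exact (hasDerivAt_stretchedExp hp hy).deriv

theorem deriv_stretchedExp_div (hp : p ≠ 0) (hx : 0 < x) :
    deriv (stretchedExp a p) x / x = -a * stretchedExp a p x * x ^ (p - 2) := by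
  rw [(hasDerivAt_stretchedExp hp hx).deriv, show p - 2 = p - 1 - 1 by ring, rpow_sub_one hx.ne' (p - 1)]
  ring

theorem deriv_deriv_stretchedExp (hp : p ≠ 0) (hx : 0 < x) :
    deriv (deriv (stretchedExp a p)) x =
      (-a * (p - 1) * x ^ (p - 2) + (a * x ^ (p - 1)) ^ 2) * stretchedExp a p x := by
  have h : HasDerivAt (fun y => -a * y ^ (p - 1) * stretchedExp a p y) _ x :=
    ((hasDerivAt_rpow_const (Or.inl hx.ne')).const_mul (-a)).mul (hasDerivAt_stretchedExp hp hx)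
  rw [(deriv_stretchedExp_eventuallyEq hp hx).deriv_eq, h.deriv, show p - 1 - 1 = p - 2 by ring]
  ring

theorem deriv_stretchedExp_div_le_deriv_deriv (hp : p ≠ 0) (hp2 : p ≤ 2) (ha : 0 ≤ a)
    (hx : 0 < x) :
    deriv (stretchedExp a p) x / x ≤ deriv (deriv (stretchedExp a p)) x := by
  rw [deriv_stretchedExp_div hp hx, deriv_deriv_stretchedExp hp hx, ← sub_nonneg]
  have hv : 0 < stretchedExp a p x := exp_pos _
  have hdiff : (-a * (p - 1) * x ^ (p - 2) + (a * x ^ (p - 1)) ^ 2) * stretchedExp a p x -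
      -a * stretchedExp a p x * x ^ (p - 2) =
      (a * (2 - p) * x ^ (p - 2) + (a * x ^ (p - 1)) ^ 2) * stretchedExp a p x := by ring
  have h2p : 0 ≤ 2 - p := sub_nonneg.mpr hp2
  rw [hdiff]
  positivity

end StretchedExp

theorem min_add_sub_one_mul_eq_mul {a b : ℝ} (k : ℝ) (h : b ≤ a) :
    min (a + (k - 1) * b) (k * b) = k * b :=
  min_eq_right (by linarith)

theorem stmt9_general (k : ℕ) (hk1 : 1 ≤ k)
    (μ γ : ℝ) (hμ : 0 < μ) (hγ0 : 0 ≤ γ) (hγ2 : γ ≠ 2)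
    (v : ℝ → ℝ)
    (hv : ∀ r : ℝ, v r = Real.exp (-(μ / ((k:ℝ) * (2 - γ))) * r ^ (2 - γ))) :
    ∀ r ∈ Ioo (0:ℝ) 1,
      0 < v r ∧
      deriv v r / r = -(μ / (k:ℝ)) * v r * r ^ (-γ) ∧
      0 ≤ deriv (deriv v) r - deriv v r / r ∧
      min (deriv (deriv v) r + ((k:ℝ) - 1) * deriv v r / r)
          ((k:ℝ) * deriv v r / r) + μ * v r * r ^ (-γ) = 0 := by
  rintro r ⟨hr, -⟩
  have hk : (k : ℝ) ≠ 0 := by positivity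
  have hp : (2 : ℝ) - γ ≠ 0 := sub_ne_zero.mpr hγ2.symm
  have hv_eq : v = stretchedExp (μ / k) (2 - γ) := by
    funext x
    rw [hv, stretchedExp, div_div]
  have hv' : deriv v r / r = -(μ / k) * v r * r ^ (-γ) := by
    rw [hv_eq, deriv_stretchedExp_div hp hr, show 2 - γ - 2 = -γ by ring]
  have hv'' : deriv v r / r ≤ deriv (deriv v) r := by
    rw [hv_eq]
    exact deriv_stretchedExp_div_le_deriv_deriv hp (by linarith) (by positivity) hr
  refine ⟨hv_eq ▸ exp_pos _, hv', sub_nonneg.mpr hv'', ?_⟩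
  rw [mul_div_assoc, mul_div_assoc, min_add_sub_one_mul_eq_mul _ hv'', hv']
  field_simp
  ring

theorem stmt9 (N k : ℕ) (hk1 : 1 ≤ k) (hkN : k + 1 ≤ N)
    (μ γ : ℝ) (hμ : 0 < μ) (hγ0 : 0 ≤ γ) (hγ2 : γ ≠ 2)
    (v : ℝ → ℝ)
    (hv : ∀ r : ℝ, v r = Real.exp (-(μ / ((k:ℝ) * (2 - γ))) * r ^ (2 - γ))) :
    ∀ r ∈ Ioo (0:ℝ) 1,
      0 < v r ∧
      deriv v r / r = -(μ / (k:ℝ)) * v r * r ^ (-γ) ∧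
      0 ≤ deriv (deriv v) r - deriv v r / r ∧
      min (deriv (deriv v) r + ((k:ℝ) - 1) * deriv v r / r)
          ((k:ℝ) * deriv v r / r) + μ * v r * r ^ (-γ) = 0 :=
  stmt9_general k hk1 μ γ hμ hγ0 hγ2 v hv
end

section
/- Let k ≥ 2, μ > 0, p > 1 with μ/k < 2/(p-1), i.e. p < 1 + 2k/μ. Let c > 0 and define, for r > 0 small enough that c·r^{μ(p-1)/k} - r²/(2k/(p-1) - μ) > 0, u(r) = (c·r^{μ(p-1)/k} - r²/(2k/(p-1) - μ))^{-1/(p-1)}. Then u is positive, satisfies the first-order ODE k·u'(r)/r + μ·u(r)/r² = u(r)^p, and u(r)·r^{μ/k} → c^{-1/(p-1)} as r → 0⁺. -/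
/-!
Substituting `w = u ^ (1 - p)` turns the Bernoulli equation `k u' / r + μ u / r² = u ^ p` into the
linear equation `w' = α w / r - (p - 1) r / k` with `α = μ (p - 1) / k`, whose solutions are
`w = c r ^ α - r² / β` with `β = k (2 - α) / (p - 1) = 2k / (p - 1) - μ`. Since `α < 2`, the
factorisation `w = r ^ α (c - r ^ (2 - α) / β)` shows that `w > 0` near `0` and that
`u r ^ (μ / k) = (c - r ^ (2 - α) / β) ^ (-1 / (p - 1)) → c ^ (-1 / (p - 1))`.
-/

open Set Filter Topology

theorem bernoulli_ode_of_linear_ode {k μ p r w' : ℝ} {w : ℝ → ℝ} (hp : p ≠ 1) (hr : r ≠ 0)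
    (hw : 0 < w r) (hw' : HasDerivAt w w' r)
    (hlin : k * w' / r + (1 - p) * μ * w r / r ^ 2 = 1 - p) :
    k * deriv (fun s => w s ^ (-(1 / (p - 1)))) r / r + μ * w r ^ (-(1 / (p - 1))) / r ^ 2 =
      (w r ^ (-(1 / (p - 1)))) ^ p := by
  have hq : 1 / (p - 1) * (p - 1) = 1 := one_div_mul_cancel (sub_ne_zero.2 hp)
  generalize 1 / (p - 1) = q at hq ⊢
  rw [(hw'.rpow_const (Or.inl hw.ne')).deriv, ← Real.rpow_mul hw.le]
  have hpow : w r ^ (-q) = w r ^ (-q * p) * w r := by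
    rw [← Real.rpow_add_one hw.ne']
    congr 1
    linear_combination hq
  have hexp : -q - 1 = -q * p := by linear_combination hq
  have hlin' : k * (w' * -q) / r + μ * w r / r ^ 2 = 1 := by
    field_simp at hlin ⊢
    linear_combination (-q) * hlin + (r ^ 2 - μ * w r) * hq
  rw [hexp, hpow]
  linear_combination w r ^ (-q * p) * hlin'

section Profile

variable {c α β : ℝ}

theorem mul_rpow_sub_div_eq {r : ℝ} (hr : 0 < r) :
    c * r ^ α - r ^ (2 : ℝ) / β = r ^ α * (c - r ^ (2 - α) / β) := by
  rw [mul_sub, ← mul_div_assoc, ← Real.rpow_add hr, add_sub_cancel, mul_comm]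

theorem hasDerivAt_mul_rpow_sub_div {r : ℝ} (hr : 0 < r) :
    HasDerivAt (fun s => c * s ^ α - s ^ (2 : ℝ) / β)
      (α * (c * r ^ α - r ^ (2 : ℝ) / β) / r - (2 - α) * r / β) r := by
  have h := ((Real.hasDerivAt_rpow_const (p := α) (Or.inl hr.ne')).const_mul c).sub
    ((Real.hasDerivAt_rpow_const (p := 2) (Or.inl hr.ne')).div_const β)
  refine h.congr_deriv ?_
  rw [Real.rpow_sub_one hr.ne', Real.rpow_sub_one hr.ne', Real.rpow_two]
  field_simp
  ring

theorem tendsto_sub_rpow_div_nhdsGT_zero (hα : α < 2) :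
    Tendsto (fun r => c - r ^ (2 - α) / β) (𝓝[>] 0) (𝓝 c) := by
  have h : Tendsto (fun r : ℝ => r ^ (2 - α)) (𝓝[>] 0) (𝓝 0) := by
    simpa [Real.zero_rpow (sub_pos.2 hα).ne'] using
      (Real.continuousAt_rpow_const 0 (2 - α) (Or.inr (sub_pos.2 hα).le)).tendsto.mono_left
        nhdsWithin_le_nhds
  simpa using tendsto_const_nhds.sub (h.div_const β)

theorem eventually_mul_rpow_sub_div_pos (hc : 0 < c) (hα : α < 2) :
    ∀ᶠ r in 𝓝[>] 0, 0 < c * r ^ α - r ^ (2 : ℝ) / β := by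
  filter_upwards [self_mem_nhdsWithin,
    (tendsto_sub_rpow_div_nhdsGT_zero (β := β) hα).eventually_const_lt hc] with r hr hpos
  rw [mul_rpow_sub_div_eq hr]
  exact mul_pos (Real.rpow_pos_of_pos hr α) hpos

theorem tendsto_mul_rpow_sub_div_rpow_neg_mul_rpow (hc : 0 < c) (hα : α < 2) (q : ℝ) :
    Tendsto (fun r => (c * r ^ α - r ^ (2 : ℝ) / β) ^ (-q) * r ^ (α * q)) (𝓝[>] 0)
      (𝓝 (c ^ (-q))) := by
  have hlim := tendsto_sub_rpow_div_nhdsGT_zero (c := c) (β := β) hα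
  refine ((Real.continuousAt_rpow_const c (-q) (Or.inl hc.ne')).tendsto.comp hlim).congr' ?_
  filter_upwards [self_mem_nhdsWithin, hlim.eventually_const_lt hc] with r hr hpos
  rw [Function.comp_apply, mul_rpow_sub_div_eq hr, Real.mul_rpow (Real.rpow_nonneg hr.le α)
    hpos.le, ← Real.rpow_mul hr.le, mul_right_comm, ← Real.rpow_add hr, mul_neg,
    neg_add_cancel, Real.rpow_zero, one_mul]

theorem bernoulli_ode_mul_rpow_sub_div {k μ p r : ℝ} (hp : p ≠ 1) (hr : 0 < r)
    (hkα : k * α = μ * (p - 1)) (hβ : (p - 1) * β = k * (2 - α)) (hβ0 : β ≠ 0)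
    (hpos : 0 < c * r ^ α - r ^ (2 : ℝ) / β) :
    k * deriv (fun s => (c * s ^ α - s ^ (2 : ℝ) / β) ^ (-(1 / (p - 1)))) r / r +
        μ * (c * r ^ α - r ^ (2 : ℝ) / β) ^ (-(1 / (p - 1))) / r ^ 2 =
      ((c * r ^ α - r ^ (2 : ℝ) / β) ^ (-(1 / (p - 1)))) ^ p := by
  refine bernoulli_ode_of_linear_ode hp hr.ne' hpos (hasDerivAt_mul_rpow_sub_div hr) ?_
  simp only [Real.rpow_two]
  field_simp
  linear_combination (c * r ^ α * β - r ^ 2) * hkα + r ^ 2 * hβ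

end Profile

theorem stmt11_general (k : ℕ) (hk : 2 ≤ k)
    (μ p : ℝ) (hp : 1 < p) (hsub : μ / (k:ℝ) < 2 / (p - 1))
    (c : ℝ) (hc : 0 < c)
    (d u : ℝ → ℝ)
    (hd : ∀ r : ℝ, d r = c * r ^ (μ * (p - 1) / (k:ℝ)) - r ^ (2:ℝ) / (2 * (k:ℝ) / (p - 1) - μ))
    (hu : ∀ r : ℝ, u r = d r ^ (-(1 / (p - 1)))) :
    (∃ r₁ ∈ Ioo (0:ℝ) 1, ∀ r ∈ Ioo (0:ℝ) r₁,
      0 < d r ∧ 0 < u r ∧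
      (k:ℝ) * deriv u r / r + μ * u r / r ^ 2 = u r ^ p) ∧
    Tendsto (fun r : ℝ => u r * r ^ (μ / (k:ℝ))) (nhdsWithin 0 (Ioi 0))
      (nhds (c ^ (-(1 / (p - 1))))) := by
  have hk0 : (0 : ℝ) < k := by exact_mod_cast (by omega : 0 < k)
  have hp1 : 0 < p - 1 := sub_pos.2 hp
  set α := μ * (p - 1) / k
  set β := 2 * k / (p - 1) - μ
  have hα : α < 2 := by
    rw [div_lt_div_iff₀ hk0 hp1] at hsub
    rw [div_lt_iff₀ hk0]
    linarith
  have hkα : k * α = μ * (p - 1) := mul_div_cancel₀ _ hk0.ne'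
  have hβ : (p - 1) * β = k * (2 - α) := by simp only [α, β]; field_simp
  have hβ0 : β ≠ 0 := right_ne_zero_of_mul (hβ ▸ (mul_pos hk0 (sub_pos.2 hα)).ne')
  obtain ⟨r₁, hr₁, hpos⟩ := (mem_nhdsGT_iff_exists_mem_Ioc_Ioo_subset one_half_pos).1
    (eventually_mul_rpow_sub_div_pos (β := β) hc hα)
  refine ⟨⟨r₁, ⟨hr₁.1, hr₁.2.trans_lt one_half_lt_one⟩, fun r hr => ?_⟩, ?_⟩
  · have hdpos : 0 < d r := hd r ▸ hpos hr
    refine ⟨hdpos, hu r ▸ Real.rpow_pos_of_pos hdpos _, ?_⟩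
    rw [funext hu, funext hd]
    exact bernoulli_ode_mul_rpow_sub_div hp.ne' hr.1 hkα hβ hβ0 (hd r ▸ hdpos)
  · have hexp : μ / k = α * (1 / (p - 1)) := by field_simp; exact hkα.symm
    simp only [hu, hd, hexp]
    exact tendsto_mul_rpow_sub_div_rpow_neg_mul_rpow hc hα _

theorem stmt11 (k : ℕ) (hk : 2 ≤ k)
    (μ p : ℝ) (hμ : 0 < μ) (hp : 1 < p) (hsub : μ / (k:ℝ) < 2 / (p - 1))
    (c : ℝ) (hc : 0 < c)
    (d u : ℝ → ℝ)
    (hd : ∀ r : ℝ, d r = c * r ^ (μ * (p - 1) / (k:ℝ)) - r ^ (2:ℝ) / (2 * (k:ℝ) / (p - 1) - μ))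
    (hu : ∀ r : ℝ, u r = d r ^ (-(1 / (p - 1)))) :
    (∃ r₁ ∈ Ioo (0:ℝ) 1, ∀ r ∈ Ioo (0:ℝ) r₁,
      0 < d r ∧ 0 < u r ∧
      (k:ℝ) * deriv u r / r + μ * u r / r ^ 2 = u r ^ p) ∧
    Tendsto (fun r : ℝ => u r * r ^ (μ / (k:ℝ))) (nhdsWithin 0 (Ioi 0))
      (nhds (c ^ (-(1 / (p - 1))))) :=
  stmt11_general k hk μ p hp hsub c hc d u hd hu
end

section
/- Let k ≥ 2, μ > 0 and p = 1 + 2k/μ (so 2/(p-1) = μ/k). Let c ∈ ℝ and define, for r > 0 small enough that c + ((p-1)/k)(-log r) > 0, u(r) = r^{-2/(p-1)} · (c + ((p-1)/k)(-log r))^{-1/(p-1)}. Then u is positive, satisfies k·u'(r)/r + μ·u(r)/r² = u(r)^p, and u(r)·r^{2/(p-1)}·(-log r)^{1/(p-1)} → (k/(p-1))^{1/(p-1)} as r → 0⁺. -/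
open Set Filter

theorem stmt12 (k : ℕ) (hk : 2 ≤ k)
    (μ p : ℝ) (hμ : 0 < μ) (hp : p = 1 + 2 * (k:ℝ) / μ)
    (c : ℝ)
    (u : ℝ → ℝ)
    (hu : ∀ r : ℝ, u r = r ^ (-(2 / (p - 1))) *
      (c + ((p - 1) / (k:ℝ)) * (-Real.log r)) ^ (-(1 / (p - 1)))) :
    (∃ r₁ ∈ Ioo (0:ℝ) 1, ∀ r ∈ Ioo (0:ℝ) r₁,
      0 < c + ((p - 1) / (k:ℝ)) * (-Real.log r) ∧ 0 < u r ∧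
      (k:ℝ) * deriv u r / r + μ * u r / r ^ 2 = u r ^ p) ∧
    Tendsto (fun r : ℝ => u r * r ^ (2 / (p - 1)) * (-Real.log r) ^ (1 / (p - 1)))
      (nhdsWithin 0 (Ioi 0)) (nhds (((k:ℝ) / (p - 1)) ^ (1 / (p - 1)))) := by
  have hk0 : (0:ℝ) < k := by positivity
  have hp1 : p - 1 = 2 * (k:ℝ) / μ := by rw [hp]; ring
  have hp1pos : 0 < p - 1 := by rw [hp1]; positivity
  have hp1ne : p - 1 ≠ 0 := ne_of_gt hp1pos
  set b : ℝ := (p - 1) / (k:ℝ) with hbdef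
  have hb : 0 < b := div_pos hp1pos hk0
  have hμeq : μ = 2 * (k:ℝ) / (p - 1) := by
    field_simp at hp1 ⊢; linarith [hp1]
  set r₁ : ℝ := min (Real.exp (c / b)) (1/2) with hr₁def
  have hr₁0 : 0 < r₁ := lt_min (Real.exp_pos _) (by norm_num)
  have hr₁1 : r₁ < 1 := lt_of_le_of_lt (min_le_right _ _) (by norm_num)
  have hGpos : ∀ r ∈ Ioo (0:ℝ) r₁, 0 < c + b * (-Real.log r) := by
    intro r hr
    have hr0 : 0 < r := hr.1
    have hlt : r < Real.exp (c / b) := lt_of_lt_of_le hr.2 (min_le_left _ _)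
    have hlog : Real.log r < c / b := by
      have := Real.log_lt_log hr0 hlt
      rwa [Real.log_exp] at this
    have h1 : b * (-(c / b)) < b * (-Real.log r) :=
      mul_lt_mul_of_pos_left (neg_lt_neg hlog) hb
    rw [mul_neg, mul_div_cancel₀ _ (ne_of_gt hb)] at h1
    linarith
  constructor
  · refine ⟨r₁, ⟨hr₁0, hr₁1⟩, ?_⟩
    intro r hr
    have hr0 : 0 < r := hr.1
    have hrne : r ≠ 0 := ne_of_gt hr0
    have hG : 0 < c + b * (-Real.log r) := hGpos r hr
    have hGne : c + b * (-Real.log r) ≠ 0 := ne_of_gt hG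
    refine ⟨hG, ?_, ?_⟩
    · rw [hu r]
      exact mul_pos (Real.rpow_pos_of_pos hr0 _) (Real.rpow_pos_of_pos hG _)
    · -- derivative
      have hufun : u = fun r => r ^ (-(2 / (p - 1))) *
          (c + b * (-Real.log r)) ^ (-(1 / (p - 1))) := funext hu
      have hg : HasDerivAt (fun r : ℝ => c + b * (-Real.log r)) (b * (-r⁻¹)) r := by
        have := (Real.hasDerivAt_log hrne).neg.const_mul b
        simpa using this.const_add c
      have h1 : HasDerivAt (fun r : ℝ => r ^ (-(2 / (p - 1))))
          ((-(2 / (p - 1))) * r ^ (-(2 / (p - 1)) - 1)) r :=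
        Real.hasDerivAt_rpow_const (Or.inl hrne)
      have h2 := hg.rpow_const (p := -(1 / (p - 1))) (Or.inl hGne)
      have hD := h1.mul h2
      have hderiv : deriv u r =
          (-(2 / (p - 1)) * r ^ (-(2 / (p - 1)) - 1) * (c + b * -Real.log r) ^ (-(1 / (p - 1))) +
            r ^ (-(2 / (p - 1))) *
              (b * -r⁻¹ * -(1 / (p - 1)) * (c + b * -Real.log r) ^ (-(1 / (p - 1)) - 1))) := by
        rw [hufun]; exact hD.deriv
      rw [hderiv, hu r]
      set G : ℝ := c + b * (-Real.log r) with hGdef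
      set X : ℝ := r ^ (-(2 / (p - 1))) with hX
      set Y : ℝ := G ^ (-(1 / (p - 1))) with hY
      have hXpos : 0 < X := Real.rpow_pos_of_pos hr0 _
      have hYpos : 0 < Y := Real.rpow_pos_of_pos hG _
      have e1 : r ^ (-(2 / (p - 1)) - 1) = X / r := by
        rw [hX, Real.rpow_sub hr0, Real.rpow_one]
      have e2 : G ^ (-(1 / (p - 1)) - 1) = Y / G := by
        rw [hY, Real.rpow_sub hG, Real.rpow_one]
      have e3 : (X * Y) ^ p = (X / r ^ 2) * (Y / G) := by
        rw [Real.mul_rpow hXpos.le hYpos.le]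
        have eX : X ^ p = X / r ^ 2 := by
          rw [hX, ← Real.rpow_mul hr0.le,
            show (r:ℝ) ^ 2 = r ^ ((2:ℕ):ℝ) from (Real.rpow_natCast r 2).symm,
            ← Real.rpow_sub hr0]
          congr 1
          push_cast
          field_simp
          ring
        have eY : Y ^ p = Y / G := by
          rw [hY, ← Real.rpow_mul hG.le,
            show G ^ (-(1 / (p - 1))) / G = G ^ (-(1 / (p - 1)) - 1) from by
              rw [Real.rpow_sub hG, Real.rpow_one]]
          congr 1
          field_simp
          ring
        rw [eX, eY]
      rw [e1, e2, e3, hμeq]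
      have hr2 : (r:ℝ) ^ 2 ≠ 0 := pow_ne_zero _ hrne
      have hkne : (k:ℝ) ≠ 0 := ne_of_gt hk0
      rw [hbdef]
      field_simp
      ring
  · -- the limit
    have hEq : ∀ᶠ r in nhdsWithin (0:ℝ) (Ioi 0),
        u r * r ^ (2 / (p - 1)) * (-Real.log r) ^ (1 / (p - 1)) =
        ((-Real.log r) / (c + b * (-Real.log r))) ^ (1 / (p - 1)) := by
      filter_upwards [Ioo_mem_nhdsGT_of_mem (by exact ⟨le_refl _, hr₁0⟩ : (0:ℝ) ∈ Ico 0 r₁)]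
        with r hr
      have hr0 : 0 < r := hr.1
      have hG : 0 < c + b * (-Real.log r) := hGpos r hr
      have hL : 0 < -Real.log r := by
        have : Real.log r < 0 := Real.log_neg hr0 (lt_trans hr.2 hr₁1)
        linarith
      rw [hu r]
      rw [show r ^ (-(2 / (p - 1))) * (c + b * (-Real.log r)) ^ (-(1 / (p - 1))) *
            r ^ (2 / (p - 1)) * (-Real.log r) ^ (1 / (p - 1)) =
          (r ^ (-(2 / (p - 1))) * r ^ (2 / (p - 1))) *
            ((c + b * (-Real.log r)) ^ (-(1 / (p - 1))) * (-Real.log r) ^ (1 / (p - 1)))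
          from by ring,
        ← Real.rpow_add hr0, neg_add_cancel, Real.rpow_zero, one_mul,
        Real.div_rpow hL.le hG.le, Real.rpow_neg hG.le]
      ring
    rw [tendsto_congr' hEq]
    have hbinv : (k:ℝ) / (p - 1) = 1 / b := by rw [hbdef, one_div_div]
    rw [hbinv]
    have hlogT : Tendsto (fun r : ℝ => -Real.log r) (nhdsWithin 0 (Ioi 0)) atTop :=
      tendsto_neg_atBot_atTop.comp Real.tendsto_log_nhdsGT_zero
    have hfrac : Tendsto (fun L : ℝ => L / (c + b * L)) atTop (nhds (1 / b)) := by
      have hev : ∀ᶠ L in (atTop : Filter ℝ),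
          L / (c + b * L) = 1 / (c / L + b) := by
        filter_upwards [eventually_gt_atTop (0:ℝ)] with L hL
        rw [div_add' _ _ _ (ne_of_gt hL), one_div_div]
      rw [tendsto_congr' hev]
      have h0 : Tendsto (fun L : ℝ => c / L + b) atTop (nhds (0 + b)) :=
        (tendsto_const_nhds.div_atTop tendsto_id).add tendsto_const_nhds
      rw [zero_add] at h0
      exact tendsto_const_nhds.div h0 (ne_of_gt hb)
    have hcont : ContinuousAt (fun x : ℝ => x ^ (1 / (p - 1))) (1 / b) :=
      Real.continuousAt_rpow_const _ _ (Or.inl (ne_of_gt (by positivity)))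
    exact hcont.tendsto.comp (hfrac.comp hlogT)
end

section
/- Let k ≥ 2, μ > 0, p > 1 with μ/k > 2/(p-1), i.e. p > 1 + 2k/μ. For c ∈ ℝ define, for r > 0 small enough that c·r^{μ(p-1)/k} + r²/(μ - 2k/(p-1)) > 0, u(r) = (c·r^{μ(p-1)/k} + r²/(μ - 2k/(p-1)))^{-1/(p-1)}. Then u is positive, satisfies k·u'(r)/r + μ·u(r)/r² = u(r)^p, and u(r)·r^{2/(p-1)} → (μ - 2k/(p-1))^{1/(p-1)} as r → 0⁺. -/
/-!
The substitution `u = d ^ (-1/(p-1))` turns `k u'/r + μ u/r² = u^p` into the linear equation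
`-(k/(p-1)) d'/r + μ d/r² = 1`, whose solutions are `d = c r^α + r²/A` with `α = μ(p-1)/k` and
`A = μ - 2k/(p-1)`. In the supercritical range `α > 2`, so `d = r² (c r^(α-2) + 1/A) ~ r²/A`
as `r → 0⁺`; this gives positivity of `d` near `0` and the limit of `u r^(2/(p-1))`.
-/

open Set Filter Topology

lemma exists_Ioo_forall_of_eventually_nhdsGT_zero {P : ℝ → Prop} (h : ∀ᶠ r in 𝓝[>] 0, P r) :
    ∃ r₁ ∈ Ioo (0:ℝ) 1, ∀ r ∈ Ioo 0 r₁, P r := by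
  obtain ⟨b, hb, hP⟩ := mem_nhdsGT_iff_exists_Ioo_subset.mp h
  have hb : (0:ℝ) < b := hb
  refine ⟨min b (1 / 2), ⟨by positivity, by linarith [min_le_right b (1 / 2)]⟩, ?_⟩
  exact fun r hr => hP ⟨hr.1, hr.2.trans_le (min_le_left _ _)⟩

section Profile

variable (c α A : ℝ)

lemma mul_rpow_add_rpow_two_div_eq {r : ℝ} (hr : 0 < r) :
    c * r ^ α + r ^ (2:ℝ) / A = r ^ (2:ℝ) * (c * r ^ (α - 2) + 1 / A) := by
  rw [Real.rpow_sub hr]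
  field_simp

lemma tendsto_mul_rpow_sub_two_add (hα : 2 < α) :
    Tendsto (fun r => c * r ^ (α - 2) + 1 / A) (𝓝[>] 0) (𝓝 (1 / A)) := by
  have hcont : ContinuousAt (fun r : ℝ => c * r ^ (α - 2) + 1 / A) 0 :=
    ((Real.continuousAt_rpow_const 0 _ (Or.inr (by linarith))).const_mul c).add_const _
  simpa [Real.zero_rpow (by linarith : α - 2 ≠ 0)] using hcont.continuousWithinAt.tendsto (s := Ioi 0)

lemma eventually_pos_mul_rpow_add_rpow_two_div (hα : 2 < α) (hA : 0 < A) :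
    ∀ᶠ r in 𝓝[>] 0, 0 < c * r ^ α + r ^ (2:ℝ) / A := by
  filter_upwards [(tendsto_mul_rpow_sub_two_add c α A hα).eventually (eventually_gt_nhds (by positivity)),
    self_mem_nhdsWithin] with r hg hr
  rw [mul_rpow_add_rpow_two_div_eq c α A hr]
  exact mul_pos (Real.rpow_pos_of_pos hr _) hg

lemma tendsto_mul_rpow_add_rpow_two_div_rpow_neg_mul_rpow (hα : 2 < α) (hA : 0 < A) (s : ℝ) :
    Tendsto (fun r => (c * r ^ α + r ^ (2:ℝ) / A) ^ (-s) * r ^ (2 * s)) (𝓝[>] 0) (𝓝 (A ^ s)) := by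
  have hlim := ((Real.continuousAt_rpow_const (1 / A) (-s) (Or.inl (by positivity))).tendsto).comp
    (tendsto_mul_rpow_sub_two_add c α A hα)
  have hval : (1 / A) ^ (-s) = A ^ s := by
    rw [one_div, Real.inv_rpow hA.le, ← Real.rpow_neg hA.le, neg_neg]
  rw [hval] at hlim
  refine hlim.congr' ?_
  filter_upwards [(tendsto_mul_rpow_sub_two_add c α A hα).eventually (eventually_gt_nhds (by positivity)),
    self_mem_nhdsWithin] with r hg hr
  have hr : (0:ℝ) < r := hr
  rw [Function.comp_apply, mul_rpow_add_rpow_two_div_eq c α A hr,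
    Real.mul_rpow (Real.rpow_nonneg hr.le _) hg.le, ← Real.rpow_mul hr.le, mul_right_comm,
    ← Real.rpow_add hr, mul_neg, neg_add_cancel, Real.rpow_zero, one_mul]

lemma hasDerivAt_mul_rpow_add_rpow_two_div {r : ℝ} (hr : 0 < r) :
    HasDerivAt (fun x => c * x ^ α + x ^ (2:ℝ) / A) (c * (α * r ^ (α - 1)) + 2 * r / A) r := by
  have h := ((Real.hasDerivAt_rpow_const (p := α) (Or.inl hr.ne')).const_mul c).add
    ((Real.hasDerivAt_rpow_const (p := 2) (Or.inl hr.ne')).div_const A)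
  exact h.congr_deriv (by norm_num)

lemma linear_eq_mul_rpow_add_rpow_two_div {K μ : ℝ} (hα : K * α = μ) (hA : A = μ - 2 * K)
    (hA0 : A ≠ 0) {r : ℝ} (hr : 0 < r) :
    -K * (c * (α * r ^ (α - 1)) + 2 * r / A) / r + μ * (c * r ^ α + r ^ (2:ℝ) / A) / r ^ 2 = 1 := by
  rw [Real.rpow_sub_one hr.ne', Real.rpow_two]
  field_simp
  subst hα
  linear_combination -r^2 * hA

end Profile

lemma radial_eq_rpow_of_linear_eq {k μ p : ℝ} (hp : p ≠ 1) {D : ℝ → ℝ} {D' r : ℝ}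
    (hD : HasDerivAt D D' r) (hpos : 0 < D r)
    (hlin : -(k / (p - 1)) * D' / r + μ * D r / r ^ 2 = 1) :
    k * deriv (fun x => D x ^ (-(1 / (p - 1)))) r / r + μ * D r ^ (-(1 / (p - 1))) / r ^ 2
      = (D r ^ (-(1 / (p - 1)))) ^ p := by
  set q := -(1 / (p - 1))
  have hq : q * p = q - 1 := by
    have : p - 1 ≠ 0 := sub_ne_zero.mpr hp
    simp only [q]; field_simp; ring
  rw [(hD.rpow_const (Or.inl hpos.ne')).deriv, ← Real.rpow_mul hpos.le, hq]
  calc k * (D' * q * D r ^ (q - 1)) / r + μ * D r ^ q / r ^ 2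
      = D r ^ (q - 1) * (-(k / (p - 1)) * D' / r + μ * (D r ^ q / D r ^ (q - 1)) / r ^ 2) := by
        simp only [q]; field_simp
    _ = D r ^ (q - 1) := by
        rw [← Real.rpow_sub hpos, sub_sub_cancel, Real.rpow_one, hlin, mul_one]

theorem stmt13_general (k : ℕ)
    (μ p : ℝ) (hp : 1 < p) (hsup : 2 / (p - 1) < μ / (k:ℝ))
    (c : ℝ)
    (d u : ℝ → ℝ)
    (hd : ∀ r : ℝ, d r = c * r ^ (μ * (p - 1) / (k:ℝ)) + r ^ (2:ℝ) / (μ - 2 * (k:ℝ) / (p - 1)))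
    (hu : ∀ r : ℝ, u r = d r ^ (-(1 / (p - 1)))) :
    (∃ r₁ ∈ Ioo (0:ℝ) 1, ∀ r ∈ Ioo (0:ℝ) r₁,
      0 < d r ∧ 0 < u r ∧
      (k:ℝ) * deriv u r / r + μ * u r / r ^ 2 = u r ^ p) ∧
    Tendsto (fun r : ℝ => u r * r ^ (2 / (p - 1))) (nhdsWithin 0 (Ioi 0))
      (nhds ((μ - 2 * (k:ℝ) / (p - 1)) ^ (1 / (p - 1)))) := by
  have hp1 : 0 < p - 1 := sub_pos.mpr hp
  have hk : (0:ℝ) < k := by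
    refine (Nat.cast_nonneg k).lt_of_ne fun h => ?_
    rw [← h, div_zero] at hsup
    exact hsup.not_ge (by positivity)
  rw [div_lt_div_iff₀ hp1 hk] at hsup
  have hα : 2 < μ * (p - 1) / k := by rw [lt_div_iff₀ hk]; linarith
  have hA : 0 < μ - 2 * k / (p - 1) := by rw [sub_pos, div_lt_iff₀ hp1]; linarith
  obtain rfl : d = _ := funext hd
  obtain rfl : u = _ := funext hu
  refine ⟨exists_Ioo_forall_of_eventually_nhdsGT_zero ?_, ?_⟩
  · filter_upwards [eventually_pos_mul_rpow_add_rpow_two_div c _ _ hα hA, self_mem_nhdsWithin]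
      with r hdr hr
    refine ⟨hdr, Real.rpow_pos_of_pos hdr _, radial_eq_rpow_of_linear_eq hp.ne'
      (hasDerivAt_mul_rpow_add_rpow_two_div c _ _ hr) hdr ?_⟩
    exact linear_eq_mul_rpow_add_rpow_two_div c _ _ (by field_simp) (by ring) hA.ne' hr
  · have h := tendsto_mul_rpow_add_rpow_two_div_rpow_neg_mul_rpow c _ _ hα hA (1 / (p - 1))
    rwa [mul_one_div] at h

theorem stmt13 (k : ℕ) (hk : 2 ≤ k)
    (μ p : ℝ) (hμ : 0 < μ) (hp : 1 < p) (hsup : 2 / (p - 1) < μ / (k:ℝ))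
    (c : ℝ)
    (d u : ℝ → ℝ)
    (hd : ∀ r : ℝ, d r = c * r ^ (μ * (p - 1) / (k:ℝ)) + r ^ (2:ℝ) / (μ - 2 * (k:ℝ) / (p - 1)))
    (hu : ∀ r : ℝ, u r = d r ^ (-(1 / (p - 1)))) :
    (∃ r₁ ∈ Ioo (0:ℝ) 1, ∀ r ∈ Ioo (0:ℝ) r₁,
      0 < d r ∧ 0 < u r ∧
      (k:ℝ) * deriv u r / r + μ * u r / r ^ 2 = u r ^ p) ∧
    Tendsto (fun r : ℝ => u r * r ^ (2 / (p - 1))) (nhdsWithin 0 (Ioi 0))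
      (nhds ((μ - 2 * (k:ℝ) / (p - 1)) ^ (1 / (p - 1)))) :=
  stmt13_general k μ p hp hsup c d u hd hu
end

section
/- Let k ≥ 2, μ > 0, p > 1. Suppose u : (0,1) → ℝ is C², positive, satisfies min(u''(r)+(k-1)u'(r)/r, k·u'(r)/r) + μ·u(r)/r² = u(r)^p for all r ∈ (0,1), and suppose lim_{r→0⁺} u(r)·r^{2/(p-1)} = +∞. Then u'(r) ≥ 0 for all sufficiently small r > 0. -/
/-!
Raising the blow-up to the power `p - 1` gives `u ^ (p - 1) * r ^ 2 → ∞`, so near the origin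
`μ u / r² < u ^ p`. The equation then makes the minimum, hence its entry `k u' / r`, positive.
-/

open Set Filter Topology

lemma rpow_sub_one_mul_rpow_two_div {u r p : ℝ} (hu : 0 ≤ u) (hr : 0 ≤ r) (hp : p ≠ 1) :
    (u * r ^ (2 / (p - 1))) ^ (p - 1) = u ^ (p - 1) * r ^ 2 := by
  rw [Real.mul_rpow hu (Real.rpow_nonneg hr _), ← Real.rpow_mul hr,
    div_mul_cancel₀ _ (sub_ne_zero.mpr hp)]
  norm_num

lemma tendsto_rpow_sub_one_mul_sq {u : ℝ → ℝ} {p : ℝ} {l : Filter ℝ} (hp : 1 < p)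
    (hu : ∀ᶠ r in l, 0 ≤ u r ∧ 0 ≤ r)
    (h : Tendsto (fun r ↦ u r * r ^ (2 / (p - 1))) l atTop) :
    Tendsto (fun r ↦ u r ^ (p - 1) * r ^ 2) l atTop := by
  refine ((tendsto_rpow_atTop (sub_pos.mpr hp)).comp h).congr' ?_
  filter_upwards [hu] with r ⟨hur, hr⟩
  exact rpow_sub_one_mul_rpow_two_div hur hr hp.ne'

lemma mul_div_sq_lt_rpow {μ u r p : ℝ} (hu : 0 < u) (hr : 0 < r)
    (h : μ < u ^ (p - 1) * r ^ 2) : μ * u / r ^ 2 < u ^ p := by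
  rw [div_lt_iff₀ (by positivity)]
  calc μ * u < u ^ (p - 1) * r ^ 2 * u := mul_lt_mul_of_pos_right h hu
    _ = u ^ p * r ^ 2 := by
      rw [Real.rpow_sub_one hu.ne']
      field_simp

lemma nonneg_of_pos_mul_div {c v r : ℝ} (hc : 0 ≤ c) (hr : 0 < r) (h : 0 < c * v / r) :
    0 ≤ v := by
  by_contra! hv
  have : c * v / r ≤ 0 :=
    div_nonpos_of_nonpos_of_nonneg (mul_nonpos_of_nonneg_of_nonpos hc hv.le) hr.le
  linarith

theorem stmt15_general (k : ℕ)
    (μ p : ℝ) (hp : 1 < p)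
    (u u' u'' : ℝ → ℝ)
    (hupos : ∀ r ∈ Ioo (0:ℝ) 1, 0 < u r)
    (heq : ∀ r ∈ Ioo (0:ℝ) 1,
      min (u'' r + ((k:ℝ) - 1) * u' r / r) ((k:ℝ) * u' r / r)
        + μ * u r / r ^ 2 = u r ^ p)
    (hblow : Tendsto (fun r : ℝ => u r * r ^ (2 / (p - 1)))
      (nhdsWithin 0 (Ioi 0)) atTop) :
    ∃ r₀ ∈ Ioo (0:ℝ) 1, ∀ r ∈ Ioo (0:ℝ) r₀, 0 ≤ u' r := by
  have hunit : Ioo (0:ℝ) 1 ∈ 𝓝[>] 0 := Ioo_mem_nhdsGT one_pos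
  have hgrowth : Tendsto (fun r ↦ u r ^ (p - 1) * r ^ 2) (𝓝[>] 0) atTop :=
    tendsto_rpow_sub_one_mul_sq hp
      (by filter_upwards [hunit] with r hr using ⟨(hupos r hr).le, hr.1.le⟩) hblow
  have hev : ∀ᶠ r in 𝓝[>] 0, 0 ≤ u' r := by
    filter_upwards [hunit, hgrowth.eventually_gt_atTop μ] with r hr hμr
    have hlt := mul_div_sq_lt_rpow (hupos r hr) hr.1 hμr
    have hmin := (sub_pos.mpr hlt).trans_eq (eq_sub_of_add_eq (heq r hr)).symm
    exact nonneg_of_pos_mul_div k.cast_nonneg hr.1 (hmin.trans_le (min_le_right _ _))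
  obtain ⟨r₀, hr₀, hsub⟩ := (mem_nhdsGT_iff_exists_mem_Ioc_Ioo_subset one_half_pos).1 hev
  exact ⟨r₀, ⟨hr₀.1, hr₀.2.trans_lt one_half_lt_one⟩, hsub⟩

theorem stmt15 (k : ℕ) (hk : 2 ≤ k)
    (μ p : ℝ) (hμ : 0 < μ) (hp : 1 < p)
    (u u' u'' : ℝ → ℝ)
    (hu' : ∀ r ∈ Ioo (0:ℝ) 1, HasDerivAt u (u' r) r)
    (hu'' : ∀ r ∈ Ioo (0:ℝ) 1, HasDerivAt u' (u'' r) r)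
    (hu''c : ContinuousOn u'' (Ioo (0:ℝ) 1))
    (hupos : ∀ r ∈ Ioo (0:ℝ) 1, 0 < u r)
    (heq : ∀ r ∈ Ioo (0:ℝ) 1,
      min (u'' r + ((k:ℝ) - 1) * u' r / r) ((k:ℝ) * u' r / r)
        + μ * u r / r ^ 2 = u r ^ p)
    (hblow : Tendsto (fun r : ℝ => u r * r ^ (2 / (p - 1)))
      (nhdsWithin 0 (Ioi 0)) atTop) :
    ∃ r₀ ∈ Ioo (0:ℝ) 1, ∀ r ∈ Ioo (0:ℝ) r₀, 0 ≤ u' r :=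
  stmt15_general k μ p hp u u' u'' hupos heq hblow
end

section
/- Let p > 1 and suppose u : (0, r₀) → ℝ is C², positive, nonincreasing (u' ≤ 0), with u(r) → +∞ as r → 0⁺, and u''(r) ≥ u(r)^p / 2 for all r ∈ (0, r₀). Then lim sup_{r→0⁺} u(r)·r^{2/(p-1)} < +∞. -/
/-!
Multiplying `u'' ≥ u^p / 2` by `u' ≤ 0` shows that the energy `(p + 1) u'^2 - u^(p+1)` is
nonincreasing, so it is bounded below near `0`. Since `u` blows up, this gives
`u^(p+1) ≤ 2 (p + 1) u'^2` near `0`, i.e. `u^((p+1)/2) ≤ A (-u')`. Hence `u^(-(p-1)/2)` has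
derivative at least `(p - 1) / (2A)` and tends to `0` at `0`, so `u(r)^(-(p-1)/2) ≥ c r`, which is
the bound `u(r) ≤ (c r)^(-2/(p-1))`.
-/

open Set Filter Topology Real

lemma antitoneOn_energy {u u' u'' : ℝ → ℝ} {p k a b : ℝ} (hp : 0 ≤ p + 1)
    (hu' : ∀ r ∈ Ioo a b, HasDerivAt u (u' r) r) (hu'' : ∀ r ∈ Ioo a b, HasDerivAt u' (u'' r) r)
    (hpos : ∀ r ∈ Ioo a b, 0 < u r) (hdec : ∀ r ∈ Ioo a b, u' r ≤ 0)
    (hconv : ∀ r ∈ Ioo a b, k * u r ^ p ≤ u'' r) :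
    AntitoneOn (fun r => (p + 1) * u' r ^ 2 - 2 * k * u r ^ (p + 1)) (Ioo a b) := by
  have hderiv : ∀ r ∈ Ioo a b, HasDerivAt (fun r => (p + 1) * u' r ^ 2 - 2 * k * u r ^ (p + 1))
      (2 * (p + 1) * u' r * (u'' r - k * u r ^ p)) r := fun r hr => by
    refine ((((hu'' r hr).pow 2).const_mul (p + 1)).sub
      (((hu' r hr).rpow_const (p := p + 1) (Or.inl (hpos r hr).ne')).const_mul (2 * k))).congr_deriv
      ?_
    rw [add_sub_cancel_right]
    push_cast
    ring
  refine antitoneOn_of_hasDerivWithinAt_nonpos (convex_Ioo a b)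
    (fun r hr => (hderiv r hr).continuousAt.continuousWithinAt)
    (fun r hr => (hderiv r (interior_subset hr)).hasDerivWithinAt) (fun r hr => ?_)
  rw [interior_Ioo] at hr
  exact mul_nonpos_of_nonpos_of_nonneg (mul_nonpos_of_nonneg_of_nonpos (by positivity) (hdec r hr))
    (sub_nonneg.mpr (hconv r hr))

lemma rpow_le_sqrt_mul_neg_of_rpow_two_mul_le {x y s B : ℝ} (hx : 0 ≤ x) (hy : y ≤ 0)
    (h : x ^ (2 * s) ≤ B * y ^ 2) : x ^ s ≤ √B * -y := by
  rw [← sqrt_sq (rpow_nonneg hx s), ← sqrt_sq (neg_nonneg.mpr hy), ← sqrt_mul' _ (sq_nonneg _),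
    neg_sq]
  gcongr
  rw [← rpow_natCast, ← rpow_mul hx]
  simpa [mul_comm] using h

lemma mul_le_of_le_deriv_of_tendsto_nhdsGT_zero {f f' : ℝ → ℝ} {m δ : ℝ}
    (hf : ∀ r ∈ Ioo 0 δ, HasDerivAt f (f' r) r) (hm : ∀ r ∈ Ioo 0 δ, m ≤ f' r)
    (hlim : Tendsto f (𝓝[>] 0) (𝓝 0)) {r : ℝ} (hr : r ∈ Ioo 0 δ) : m * r ≤ f r := by
  have hmvt : ∀ s ∈ Ioo 0 r, m * (r - s) ≤ f r - f s := fun s hs =>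
    (convex_Ioo 0 δ).mul_sub_le_image_sub_of_le_deriv
      (fun x hx => (hf x hx).continuousAt.continuousWithinAt)
      (fun x hx => (hf x (interior_subset hx)).differentiableAt.differentiableWithinAt)
      (fun x hx => by rw [interior_Ioo] at hx; rw [(hf x hx).deriv]; exact hm x hx)
      s ⟨hs.1, hs.2.trans hr.2⟩ r hr hs.2.le
  have hleft : Tendsto (fun s => m * (r - s)) (𝓝[>] 0) (𝓝 (m * r)) :=
    tendsto_nhdsWithin_of_tendsto_nhds <|
      (continuous_const.mul (continuous_const.sub continuous_id)).tendsto' 0 _ (by simp)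
  simpa using le_of_tendsto_of_tendsto hleft (tendsto_const_nhds.sub hlim)
    (eventually_of_mem (Ioo_mem_nhdsGT hr.1) hmvt)

lemma mul_le_rpow_neg_of_rpow_le_mul_neg_deriv {u u' : ℝ → ℝ} {e A δ : ℝ} (he : 0 < e)
    (hA : 0 < A) (hu : ∀ r ∈ Ioo 0 δ, HasDerivAt u (u' r) r) (hpos : ∀ r ∈ Ioo 0 δ, 0 < u r)
    (hode : ∀ r ∈ Ioo 0 δ, u r ^ (1 + e) ≤ A * -u' r) (hblow : Tendsto u (𝓝[>] 0) atTop)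
    {r : ℝ} (hr : r ∈ Ioo 0 δ) : e / A * r ≤ u r ^ (-e) := by
  refine mul_le_of_le_deriv_of_tendsto_nhdsGT_zero
    (fun r hr => (hu r hr).rpow_const (Or.inl (hpos r hr).ne')) (fun s hs => ?_)
    ((tendsto_rpow_neg_atTop he).comp hblow) hr
  have hcancel : u s ^ (-e - 1) * u s ^ (1 + e) = 1 := by
    rw [← rpow_add (hpos s hs), show -e - 1 + (1 + e) = 0 by ring, rpow_zero]
  have hnonneg : 0 ≤ e * u s ^ (-e - 1) := by have := hpos s hs; positivity
  rw [div_le_iff₀' hA]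
  calc e = e * u s ^ (-e - 1) * u s ^ (1 + e) := by rw [mul_assoc, hcancel, mul_one]
    _ ≤ e * u s ^ (-e - 1) * (A * -u' s) := mul_le_mul_of_nonneg_left (hode s hs) hnonneg
    _ = A * (u' s * -e * u s ^ (-e - 1)) := by ring

lemma mul_rpow_inv_le_of_mul_le_rpow_neg {x r c e : ℝ} (hx : 0 < x) (hr : 0 < r) (hc : 0 < c)
    (he : 0 < e) (h : c * r ≤ x ^ (-e)) : x * r ^ e⁻¹ ≤ c ^ (-e⁻¹) := by
  have hx' : x = (x ^ (-e)) ^ (-e⁻¹) := by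
    rw [← rpow_mul hx.le, neg_mul_neg, mul_inv_cancel₀ he.ne', rpow_one]
  calc x * r ^ e⁻¹ ≤ (c * r) ^ (-e⁻¹) * r ^ e⁻¹ := by
        rw [hx']
        refine mul_le_mul_of_nonneg_right ?_ (rpow_nonneg hr.le _)
        exact rpow_le_rpow_of_nonpos (by positivity) h (neg_nonpos.mpr (inv_nonneg.mpr he.le))
    _ = c ^ (-e⁻¹) := by
        rw [mul_rpow hc.le hr.le, mul_assoc, ← rpow_add hr, neg_add_cancel, rpow_zero, mul_one]

theorem stmt16_general (p r₀ : ℝ) (hp : 1 < p) (hr₀ : 0 < r₀)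
    (u u' u'' : ℝ → ℝ)
    (hu' : ∀ r ∈ Ioo (0:ℝ) r₀, HasDerivAt u (u' r) r)
    (hu'' : ∀ r ∈ Ioo (0:ℝ) r₀, HasDerivAt u' (u'' r) r)
    (hupos : ∀ r ∈ Ioo (0:ℝ) r₀, 0 < u r)
    (hdec : ∀ r ∈ Ioo (0:ℝ) r₀, u' r ≤ 0)
    (hblow : Tendsto u (nhdsWithin 0 (Ioi 0)) atTop)
    (hconv : ∀ r ∈ Ioo (0:ℝ) r₀, u r ^ p / 2 ≤ u'' r) :
    ∃ M : ℝ, ∀ᶠ r in nhdsWithin (0:ℝ) (Ioi 0), u r * r ^ (2 / (p - 1)) ≤ M := by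
  set E := fun r => (p + 1) * u' r ^ 2 - 2 * (1 / 2) * u r ^ (p + 1)
  have hE : AntitoneOn E (Ioo 0 r₀) := antitoneOn_energy (by linarith) hu' hu'' hupos hdec
    fun r hr => by linarith [hconv r hr]
  have hr₁ : r₀ / 2 ∈ Ioo 0 r₀ := ⟨by positivity, by linarith⟩
  obtain ⟨δ, hδ, hsmall⟩ := mem_nhdsGT_iff_exists_Ioo_subset.mp <|
    Eventually.and (Ioo_mem_nhdsGT hr₁.1 : ∀ᶠ r in 𝓝[>] 0, r ∈ Ioo 0 (r₀ / 2)) <|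
      ((tendsto_rpow_atTop (by linarith : 0 < p + 1)).comp hblow).eventually_ge_atTop
        (-2 * E (r₀ / 2))
  have hsub : Ioo 0 δ ⊆ Ioo 0 r₀ := fun r hr => ⟨hr.1, (hsmall hr).1.2.trans hr₁.2⟩
  have hode : ∀ r ∈ Ioo 0 δ, u r ^ (1 + (p - 1) / 2) ≤ √(2 * (p + 1)) * -u' r := by
    intro r hr
    obtain ⟨hr', hlarge⟩ := hsmall hr
    have hEr : E (r₀ / 2) ≤ E r := hE (hsub hr) hr₁ hr'.2.le
    refine rpow_le_sqrt_mul_neg_of_rpow_two_mul_le (hupos r (hsub hr)).le (hdec r (hsub hr)) ?_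
    rw [show 2 * (1 + (p - 1) / 2) = p + 1 by ring]
    simp only [E, Function.comp_apply] at hEr hlarge
    linarith
  have he : 0 < (p - 1) / 2 := by linarith
  have hA : 0 < √(2 * (p + 1)) := sqrt_pos.mpr (by linarith)
  refine ⟨((p - 1) / 2 / √(2 * (p + 1))) ^ (-((p - 1) / 2)⁻¹), ?_⟩
  filter_upwards [Ioo_mem_nhdsGT hδ] with r hr
  rw [show 2 / (p - 1) = ((p - 1) / 2)⁻¹ from (inv_div _ _).symm]
  exact mul_rpow_inv_le_of_mul_le_rpow_neg (hupos r (hsub hr)) hr.1 (div_pos he hA) he <|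
    mul_le_rpow_neg_of_rpow_le_mul_neg_deriv he hA (fun s hs => hu' s (hsub hs))
      (fun s hs => hupos s (hsub hs)) hode hblow hr

theorem stmt16 (p r₀ : ℝ) (hp : 1 < p) (hr₀ : 0 < r₀)
    (u u' u'' : ℝ → ℝ)
    (hu' : ∀ r ∈ Ioo (0:ℝ) r₀, HasDerivAt u (u' r) r)
    (hu'' : ∀ r ∈ Ioo (0:ℝ) r₀, HasDerivAt u' (u'' r) r)
    (hu''c : ContinuousOn u'' (Ioo (0:ℝ) r₀))
    (hupos : ∀ r ∈ Ioo (0:ℝ) r₀, 0 < u r)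
    (hdec : ∀ r ∈ Ioo (0:ℝ) r₀, u' r ≤ 0)
    (hblow : Tendsto u (nhdsWithin 0 (Ioi 0)) atTop)
    (hconv : ∀ r ∈ Ioo (0:ℝ) r₀, u r ^ p / 2 ≤ u'' r) :
    ∃ M : ℝ, ∀ᶠ r in nhdsWithin (0:ℝ) (Ioi 0), u r * r ^ (2 / (p - 1)) ≤ M :=
  stmt16_general p r₀ hp hr₀ u u' u'' hu' hu'' hupos hdec hblow hconv
end

section
/- Let k ≥ 2 and μ > 0. There exists r₀ ∈ (0,1) such that for every C > 0 large enough and every ε > 0, the function v(r) = ε·r^{-2/(p-1)} + C·r^{-2/(p-1)}·(-log r)^{-1/(p-1)} with p = 1 + 2k/μ satisfies, for all r ∈ (0, r₀): v'(r) ≤ 0 ≤ v''(r) and k·v'(r)/r + μ·v(r)/r² = (C/(p-1))·r^{-2p/(p-1)}·(-log r)^{-p/(p-1)}·k ≤ v(r)^p. -/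
open Set

private lemma hdPL (a b r : ℝ) (h0 : 0 < r) (h1 : r < 1) :
    HasDerivAt (fun x => x ^ a * (-Real.log x) ^ b)
      (a * r ^ (a-1) * (-Real.log r) ^ b - b * r ^ (a-1) * (-Real.log r) ^ (b-1)) r := by
  have hL : 0 < -Real.log r := by
    have := Real.log_neg h0 h1; linarith
  have h1' : HasDerivAt (fun x : ℝ => x ^ a) (a * r ^ (a-1)) r :=
    Real.hasDerivAt_rpow_const (Or.inl h0.ne')
  have hlog : HasDerivAt (fun x : ℝ => -Real.log x) (-r⁻¹) r :=
    (Real.hasDerivAt_log h0.ne').neg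
  have h2' : HasDerivAt (fun y : ℝ => y ^ b) (b * (-Real.log r) ^ (b-1)) (-Real.log r) :=
    Real.hasDerivAt_rpow_const (Or.inl hL.ne')
  have h3 : HasDerivAt (fun x : ℝ => (-Real.log x) ^ b)
      (b * (-Real.log r) ^ (b-1) * -r⁻¹) r := by have h3' := h2'.comp r hlog; exact h3'
  have hm : HasDerivAt (fun x => x ^ a * (-Real.log x) ^ b)
      (a * r ^ (a-1) * (-Real.log r) ^ b + r ^ a * (b * (-Real.log r) ^ (b-1) * -r⁻¹)) r := h1'.mul h3
  convert hm using 1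
  have hra : r ^ a = r ^ (a-1) * r := by
    have h := Real.rpow_add_one h0.ne' (a-1)
    rw [sub_add_cancel] at h
    rw [h]
  rw [hra]
  field_simp
  ring

set_option maxHeartbeats 1000000 in
theorem stmt18 (k : ℕ) (hk : 2 ≤ k)
    (μ p : ℝ) (hμ : 0 < μ) (hp : p = 1 + 2 * (k:ℝ) / μ) :
    ∃ r₀ ∈ Ioo (0:ℝ) 1, ∃ C₀ > (0:ℝ), ∀ C ≥ C₀, ∀ ε > (0:ℝ),
      ∀ v : ℝ → ℝ,
        (∀ r : ℝ, v r = ε * r ^ (-(2 / (p - 1)))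
          + C * r ^ (-(2 / (p - 1))) * (-Real.log r) ^ (-(1 / (p - 1)))) →
        ∀ r ∈ Ioo (0:ℝ) r₀,
          deriv v r ≤ 0 ∧ 0 ≤ deriv (deriv v) r ∧
          (k:ℝ) * deriv v r / r + μ * v r / r ^ 2
            = ((k:ℝ) * C / (p - 1)) * r ^ (-(2 * p / (p - 1)))
              * (-Real.log r) ^ (-(p / (p - 1))) ∧
          (k:ℝ) * deriv v r / r + μ * v r / r ^ 2 ≤ v r ^ p := by
  have hk0 : (0:ℝ) < k := by exact_mod_cast lt_of_lt_of_le Nat.zero_lt_two hk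
  have hs : 0 < p - 1 := by
    have : p - 1 = 2 * k / μ := by rw [hp]; ring
    rw [this]; positivity
  obtain ⟨a, ha⟩ : ∃ a : ℝ, a = -(2 / (p - 1)) := ⟨_, rfl⟩
  obtain ⟨b, hb⟩ : ∃ b : ℝ, b = -(1 / (p - 1)) := ⟨_, rfl⟩
  rw [← ha, ← hb]
  have hab : a = 2 * b := by rw [ha, hb]; ring
  have hb_neg : b < 0 := by
    rw [hb]; simp only [neg_lt, neg_zero, neg_neg]; positivity
  have ha_neg : a < 0 := by rw [hab]; linarith
  have hka : (k:ℝ) * a = -μ := by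
    rw [ha]
    have hpm : p - 1 = 2 * k / μ := by rw [hp]; ring
    rw [hpm]
    field_simp
  have hμa : μ = -((k:ℝ) * a) := by linarith
  have hap : a * p = a - 2 := by
    have h : a * (p - 1) = -2 := by rw [ha]; field_simp
    linarith [h]
  have hbp : b * p = b - 1 := by
    have h : b * (p - 1) = -1 := by rw [hb]; field_simp
    linarith [h]
  have hp1 : 1 < p := by linarith
  refine ⟨Real.exp (-1), ⟨Real.exp_pos _, Real.exp_lt_one_iff.mpr (by norm_num)⟩,
    max 1 ((μ/2) ^ (p-1)⁻¹), lt_of_lt_of_le one_pos (le_max_left _ _), ?_⟩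
  intro C hC ε hε v hv r hr
  obtain ⟨h0, hre⟩ := hr
  have hCpos : (0:ℝ) < C := lt_of_lt_of_le (lt_of_lt_of_le one_pos (le_max_left _ _)) hC
  have hr1 : r < 1 := lt_trans hre (Real.exp_lt_one_iff.mpr (by norm_num))
  obtain ⟨L, hLdef⟩ : ∃ L : ℝ, L = -Real.log r := ⟨_, rfl⟩
  rw [← hLdef]
  have hL1 : 1 < L := by
    have := (Real.log_lt_iff_lt_exp h0).mpr hre
    rw [hLdef]; linarith
  have hL : 0 < L := by linarith
  -- v as a concrete function
  have hvfun : v = fun x => ε * x ^ a + C * (x ^ a * (-Real.log x) ^ b) := by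
    funext x; rw [hv x]; ring
  -- first derivative
  have hderiv : ∀ x ∈ Ioo (0:ℝ) 1, deriv v x
      = ε * a * x ^ (a-1)
        + (C * a * (x ^ (a-1) * (-Real.log x) ^ b)
          - C * b * (x ^ (a-1) * (-Real.log x) ^ (b-1))) := by
    intro x hx
    have hd : HasDerivAt v
        (ε * (a * x ^ (a-1))
          + C * (a * x ^ (a-1) * (-Real.log x) ^ b - b * x ^ (a-1) * (-Real.log x) ^ (b-1))) x := by
      rw [hvfun]
      exact ((Real.hasDerivAt_rpow_const (p := a) (Or.inl hx.1.ne')).const_mul ε).add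
        ((hdPL a b x hx.1 hx.2).const_mul C)
    rw [hd.deriv]; ring
  have hdvr : deriv v r
      = ε * a * r ^ (a-1) + (C * a * (r ^ (a-1) * L ^ b) - C * b * (r ^ (a-1) * L ^ (b-1))) := by
    rw [hderiv r ⟨h0, hr1⟩, hLdef]
  -- second derivative
  have hd2 : deriv (deriv v) r
      = ε * a * ((a-1) * r ^ (a-1-1))
        + (C * a * ((a-1) * r ^ (a-1-1) * L ^ b - b * r ^ (a-1-1) * L ^ (b-1))
          - C * b * ((a-1) * r ^ (a-1-1) * L ^ (b-1) - (b-1) * r ^ (a-1-1) * L ^ (b-1-1))) := by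
    have hev : deriv v =ᶠ[nhds r]
        (fun x => ε * a * x ^ (a-1)
          + (C * a * (x ^ (a-1) * (-Real.log x) ^ b)
            - C * b * (x ^ (a-1) * (-Real.log x) ^ (b-1)))) :=
      Filter.eventuallyEq_of_mem (Ioo_mem_nhds h0 hr1) hderiv
    rw [hev.deriv_eq]
    have hF1 : HasDerivAt (fun x : ℝ => x ^ (a-1)) ((a-1) * r ^ (a-1-1)) r :=
      Real.hasDerivAt_rpow_const (Or.inl h0.ne')
    have hd := ((hF1.const_mul (ε * a)).add
      (((hdPL (a-1) b r h0 hr1).const_mul (C * a)).sub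
        ((hdPL (a-1) (b-1) r h0 hr1).const_mul (C * b))))
    have hd' : HasDerivAt (fun x => ε * a * x ^ (a-1)
          + (C * a * (x ^ (a-1) * (-Real.log x) ^ b)
            - C * b * (x ^ (a-1) * (-Real.log x) ^ (b-1)))) _ r := hd
    rw [hd'.deriv, hLdef]
  -- power facts
  have hP1 : 0 < r ^ (a-1) := Real.rpow_pos_of_pos h0 _
  have hP2 : 0 < r ^ (a-1-1) := Real.rpow_pos_of_pos h0 _
  have hQ1 : 0 < L ^ (b-1) := Real.rpow_pos_of_pos hL _
  have hQ2 : 0 < L ^ (b-1-1) := Real.rpow_pos_of_pos hL _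
  have hLb : L ^ b = L ^ (b-1) * L := by
    have h := Real.rpow_add_one hL.ne' (b-1)
    rw [sub_add_cancel] at h; rw [h]
  have hLb1 : L ^ (b-1) = L ^ (b-1-1) * L := by
    have h := Real.rpow_add_one hL.ne' (b-1-1)
    rw [sub_add_cancel] at h; rw [h]
  have hrA : r ^ a = r ^ (a-1) * r := by
    have h := Real.rpow_add_one h0.ne' (a-1)
    rw [sub_add_cancel] at h; rw [h]
  have hrA1 : r ^ (a-1) = r ^ (a-1-1) * r := by
    have h := Real.rpow_add_one h0.ne' (a-1-1)
    rw [sub_add_cancel] at h; rw [h]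
  -- Goal 1
  have goal1 : deriv v r ≤ 0 := by
    rw [hdvr]
    have key : a * L - b ≤ 0 := by
      have e0 : a * L - b = b * (2*L - 1) := by rw [hab]; ring
      rw [e0]
      exact mul_nonpos_of_nonpos_of_nonneg hb_neg.le (by linarith)
    have e1 : ε * a * r ^ (a-1) + (C * a * (r ^ (a-1) * L ^ b) - C * b * (r ^ (a-1) * L ^ (b-1)))
        = ε * a * r ^ (a-1) + (C * (r ^ (a-1) * L ^ (b-1))) * (a * L - b) := by
      rw [hLb]; ring
    rw [e1]
    have t1 : ε * a * r ^ (a-1) ≤ 0 :=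
      mul_nonpos_of_nonpos_of_nonneg (mul_nonpos_of_nonneg_of_nonpos hε.le ha_neg.le) hP1.le
    have t2 : (C * (r ^ (a-1) * L ^ (b-1))) * (a * L - b) ≤ 0 :=
      mul_nonpos_of_nonneg_of_nonpos (le_of_lt (mul_pos hCpos (mul_pos hP1 hQ1))) key
    linarith
  -- Goal 2
  have goal2 : 0 ≤ deriv (deriv v) r := by
    rw [hd2]
    have keyK : 0 ≤ a * (a-1) * L^2 - (a * b + b * (a-1)) * L + b * (b-1) := by
      have e0 : a * (a-1) * L^2 - (a * b + b * (a-1)) * L + b * (b-1)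
          = (4*b^2 - 2*b) * (L^2 - L) + (-b) * (L - 1) + (b^2 - 2*b) := by
        rw [hab]; ring
      rw [e0]
      have k1 : 0 ≤ (4*b^2 - 2*b) * (L^2 - L) :=
        mul_nonneg (by nlinarith [sq_nonneg b]) (by nlinarith [mul_nonneg hL.le (by linarith : (0:ℝ) ≤ L - 1)])
      have k2 : 0 ≤ (-b) * (L - 1) := mul_nonneg (by linarith) (by linarith)
      have k3 : 0 ≤ b^2 - 2*b := by nlinarith [sq_nonneg b]
      linarith
    have hDeq : ε * a * ((a-1) * r ^ (a-1-1))
        + (C * a * ((a-1) * r ^ (a-1-1) * L ^ b - b * r ^ (a-1-1) * L ^ (b-1))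
          - C * b * ((a-1) * r ^ (a-1-1) * L ^ (b-1) - (b-1) * r ^ (a-1-1) * L ^ (b-1-1)))
        = ε * (a * (a-1)) * r ^ (a-1-1)
          + (C * (r ^ (a-1-1) * L ^ (b-1-1)))
            * (a * (a-1) * L^2 - (a * b + b * (a-1)) * L + b * (b-1)) := by
      rw [hLb, hLb1]; ring
    rw [hDeq]
    have haa1 : 0 ≤ a * (a-1) := by nlinarith
    have h1 : 0 ≤ ε * (a * (a-1)) * r ^ (a-1-1) := by positivity
    have h2 : 0 ≤ (C * (r ^ (a-1-1) * L ^ (b-1-1)))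
        * (a * (a-1) * L^2 - (a * b + b * (a-1)) * L + b * (b-1)) :=
      mul_nonneg (le_of_lt (mul_pos hCpos (mul_pos hP2 hQ2))) keyK
    linarith
  -- identity in a convenient form
  have hid2 : (k:ℝ) * deriv v r / r + μ * v r / r ^ 2
      = (-((k:ℝ) * C * b)) * (r ^ (a-1-1) * L ^ (b-1)) := by
    rw [hdvr, hv r, ← hLdef, hμa, hrA, hrA1, hLb]
    field_simp
    ring
  -- Goal 3
  have goal3 : (k:ℝ) * deriv v r / r + μ * v r / r ^ 2
      = ((k:ℝ) * C / (p - 1)) * r ^ (-(2 * p / (p - 1)))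
        * L ^ (-(p / (p - 1))) := by
    have he1 : -(2 * p / (p - 1)) = a - 1 - 1 := by rw [ha]; field_simp; ring
    have he2 : -(p / (p - 1)) = b - 1 := by rw [hb]; field_simp; ring
    have he3 : (k:ℝ) * C / (p - 1) = -((k:ℝ) * C * b) := by rw [hb]; ring
    rw [he1, he2, he3, hid2]
    ring
  -- Goal 4
  have goal4 : (k:ℝ) * deriv v r / r + μ * v r / r ^ 2 ≤ v r ^ p := by
    rw [hid2]
    have hkb : -((k:ℝ) * b) = μ / 2 := by
      have h : (k:ℝ) * (2*b) = -μ := by rw [← hab]; exact hka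
      linarith
    have hCp : μ / 2 ≤ C ^ (p-1) := by
      have hZ : (μ/2) ^ (p-1)⁻¹ ≤ C := le_trans (le_max_right _ _) hC
      have hZ0 : (0:ℝ) ≤ (μ/2) ^ (p-1)⁻¹ := Real.rpow_nonneg (by positivity) _
      have h := Real.rpow_le_rpow hZ0 hZ hs.le
      rwa [← Real.rpow_mul (by positivity), inv_mul_cancel₀ hs.ne', Real.rpow_one] at h
    have hV0 : C * (r ^ a * L ^ b) ≤ v r := by
      rw [hv r, ← hLdef]
      nlinarith [mul_pos hε (Real.rpow_pos_of_pos h0 a)]  -- linear after normalization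
    have hV0pos : 0 < C * (r ^ a * L ^ b) :=
      mul_pos hCpos (mul_pos (Real.rpow_pos_of_pos h0 _) (Real.rpow_pos_of_pos hL _))
    have hmono : (C * (r ^ a * L ^ b)) ^ p ≤ v r ^ p :=
      Real.rpow_le_rpow hV0pos.le hV0 (by linarith)
    have hexp : (C * (r ^ a * L ^ b)) ^ p = C ^ p * (r ^ (a-1-1) * L ^ (b-1)) := by
      rw [Real.mul_rpow hCpos.le (by positivity),
        Real.mul_rpow (Real.rpow_pos_of_pos h0 _).le (Real.rpow_pos_of_pos hL _).le,
        ← Real.rpow_mul h0.le, ← Real.rpow_mul hL.le, hap, hbp,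
        show a - 2 = a - 1 - 1 from by ring]
    have hCpp : C ^ p = C ^ (p-1) * C := by
      have h := Real.rpow_add_one hCpos.ne' (p-1)
      rw [sub_add_cancel] at h; rw [h]
    have hfin : (-((k:ℝ) * C * b)) * (r ^ (a-1-1) * L ^ (b-1)) ≤ C ^ p * (r ^ (a-1-1) * L ^ (b-1)) := by
      have hc : -((k:ℝ) * C * b) ≤ C ^ p := by
        have : -((k:ℝ) * C * b) = (μ/2) * C := by rw [← hkb]; ring
        rw [this, hCpp]
        exact mul_le_mul_of_nonneg_right hCp hCpos.le
      exact mul_le_mul_of_nonneg_right hc (le_of_lt (mul_pos hP2 hQ1))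
    calc (-((k:ℝ) * C * b)) * (r ^ (a-1-1) * L ^ (b-1))
        ≤ C ^ p * (r ^ (a-1-1) * L ^ (b-1)) := hfin
      _ = (C * (r ^ a * L ^ b)) ^ p := hexp.symm
      _ ≤ v r ^ p := hmono
  exact ⟨goal1, goal2, goal3, goal4⟩
end
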